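/- arXiv:2302.06606 — 6 statements merged into one kernel-verified Lean document; each statement's English description precedes it below -/
import Mathlib

section
/- Let MG be an m-player finite Markov game, let π = {π_h(·|s)}_{(s,h)} be a Markov joint policy, fix a player i ∈ [m], and suppose we are given functions \bar V_{i,h}: S → ℝ for h ∈ [H+1] with \bar V_{i,H+1} ≡ 0, and bonus functions G_{i,h}: S → [0,∞) for h ∈ [H], such that for every h ∈ [H] and every s ∈ S: (i) max_{μ_i ∈ Δ(A_i)} (D_{μ_i×π_{-i,h}} − D_{π_h})[ r_{i,h} + P_h \bar V_{i,h+1} ](s) ≤ G_{i,h}(s), and (ii) \bar V_{i,h}(s) ≥ min{ D_{π_h}[ r_{i,h} + P_h \bar V_{i,h+1} ](s) + G_{i,h}(s), H−h+1 }. Then \bar V_{i,h}(s) ≥ V^{†,π_{-i}}_{i,h}(s) for every h ∈ [H] and s ∈ S. -/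
open Finset

/-- A probability vector on a finite type. -/
def IsDist {α : Type*} [Fintype α] (p : α → ℝ) : Prop :=
  (∀ a, 0 ≤ p a) ∧ ∑ a, p a = 1

/-- Combine player `i`'s action with a profile of actions of the other players into a
joint action. -/
def combine {m : ℕ} {A : Fin m → Type*} (i : Fin m) (ai : A i)
    (an : ∀ j : {j : Fin m // j ≠ i}, A j.1) (j : Fin m) : A j :=
  if h : j = i then cast (congrArg A h).symm ai else an ⟨j, h⟩

/-- Restrict a joint action to the players other than `i`. -/
def restrict {m : ℕ} {A : Fin m → Type*} (i : Fin m) (a : ∀ j, A j)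
    (j : {j : Fin m // j ≠ i}) : A j.1 :=
  a j.1

/-- Marginal, on the actions of all players other than `i`, of a distribution `p` over
joint actions. -/
noncomputable def marg {m : ℕ} {A : Fin m → Type*} [∀ j, Fintype (A j)] (i : Fin m)
    (p : (∀ j, A j) → ℝ) (an : ∀ j : {j : Fin m // j ≠ i}, A j.1) : ℝ :=
  ∑ ai : A i, p (combine i ai an)

/-- The value function `V^π_h(s)` of a Markov joint policy `π` in the Markov game with
horizon `H`, transition probabilities `P` and (a fixed player's) rewards `rew`.  Steps
are zero-based: `h` ranges over `0, 1, …, H-1` and `jointV H P rew π H s = 0`. -/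
noncomputable def jointV {S : Type*} [Fintype S] {m : ℕ} {A : Fin m → Type*}
    [∀ j, Fintype (A j)] (H : ℕ) (P : ℕ → S → (∀ j, A j) → S → ℝ)
    (rew : ℕ → S → (∀ j, A j) → ℝ) (π : ℕ → S → (∀ j, A j) → ℝ) : ℕ → S → ℝ
  | h, s =>
    if _hh : h < H then
      ∑ a, π h s a * (rew h s a + ∑ s', P h s a s' * jointV H P rew π (h + 1) s')
    else 0
  termination_by h _ => H - h
  decreasing_by omega

/-
Backward induction on `h`. The joint policy `ρ_h = π†_{i,h} × π_{-i,h}` satisfies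
`V^ρ_h = D_{ρ_h}[r_h + P_h V^ρ_{h+1}] ≤ D_{ρ_h}[r_h + P_h Vbar_{h+1}]` once `V^ρ_{h+1} ≤ Vbar_{h+1}`,
and by the no-regret condition (i) the right-hand side is at most
`D_{π_h}[r_h + P_h Vbar_{h+1}] + G_h`. Since rewards lie in `[0, 1]` we also have `V^ρ_h ≤ H - h`,
so `V^ρ_h` is below the minimum in the optimism condition (ii), hence below `Vbar_h`.
-/

section Profiles

variable {m : ℕ} {A : Fin m → Type*}

@[simp]
lemma combine_self (i : Fin m) (ai : A i) (an : ∀ j : {j : Fin m // j ≠ i}, A j.1) :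
    combine i ai an i = ai := by
  simp [combine]

@[simp]
lemma restrict_combine (i : Fin m) (ai : A i) (an : ∀ j : {j : Fin m // j ≠ i}, A j.1) :
    restrict i (combine i ai an) = an := by
  funext j
  simp [_root_.restrict, combine, j.2]

lemma combine_restrict (i : Fin m) (a : ∀ j, A j) : combine i (a i) (restrict i a) = a := by
  funext j
  by_cases h : j = i
  · subst h
    simp [combine]
  · simp [combine, _root_.restrict, h]

def combineEquiv (i : Fin m) : (A i × ∀ j : {j : Fin m // j ≠ i}, A j.1) ≃ (∀ j, A j) where
  toFun p := combine i p.1 p.2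
  invFun a := (a i, restrict i a)
  left_inv p := by simp
  right_inv := combine_restrict i

variable [∀ j, Fintype (A j)]

lemma sum_eq_sum_combine (i : Fin m) (f : (∀ j, A j) → ℝ) :
    ∑ a, f a = ∑ ai : A i, ∑ an : ∀ j : {j : Fin m // j ≠ i}, A j.1, f (combine i ai an) := by
  rw [← Fintype.sum_prod_type']
  exact (Fintype.sum_equiv (combineEquiv i) _ _ fun _ => rfl).symm

lemma sum_marg (i : Fin m) (p : (∀ j, A j) → ℝ) :
    ∑ an : ∀ j : {j : Fin m // j ≠ i}, A j.1, marg i p an = ∑ a, p a := by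
  rw [sum_eq_sum_combine i p, Finset.sum_comm]
  rfl

lemma IsDist.prod_marg {i : Fin m} {μ : A i → ℝ} (hμ : IsDist μ) {p : (∀ j, A j) → ℝ}
    (hp : IsDist p) : IsDist fun a => μ (a i) * marg i p (restrict i a) := by
  refine ⟨fun a => mul_nonneg (hμ.1 _) (sum_nonneg fun _ _ => hp.1 _), ?_⟩
  rw [sum_eq_sum_combine i]
  simp only [combine_self, restrict_combine]
  rw [← sum_mul_sum, sum_marg, hμ.2, hp.2, mul_one]

end Profiles

lemma IsDist.sum_mul_le {α : Type*} [Fintype α] {p : α → ℝ} (hp : IsDist p) {f : α → ℝ}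
    {c : ℝ} (hf : ∀ a, f a ≤ c) : ∑ a, p a * f a ≤ c :=
  calc ∑ a, p a * f a ≤ ∑ a, p a * c :=
        sum_le_sum fun a _ => mul_le_mul_of_nonneg_left (hf a) (hp.1 a)
    _ = c := by rw [← sum_mul, hp.2, one_mul]

section Values

variable {S : Type*} [Fintype S] {m : ℕ} {A : Fin m → Type*}
  {P : ℕ → S → (∀ j, A j) → S → ℝ} {rew : ℕ → S → (∀ j, A j) → ℝ}

/-- The one-step backup `[r_h + P_h V](s, a)`. -/
def backup (P : ℕ → S → (∀ j, A j) → S → ℝ) (rew : ℕ → S → (∀ j, A j) → ℝ) (h : ℕ)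
    (V : S → ℝ) (s : S) (a : ∀ j, A j) : ℝ :=
  rew h s a + ∑ s', P h s a s' * V s'

lemma backup_mono {h : ℕ} {s : S} {a : ∀ j, A j} {V W : S → ℝ} (hP : ∀ s', 0 ≤ P h s a s')
    (hVW : ∀ s', V s' ≤ W s') : backup P rew h V s a ≤ backup P rew h W s a :=
  add_le_add le_rfl (sum_le_sum fun s' _ => mul_le_mul_of_nonneg_left (hVW s') (hP s'))

variable [∀ j, Fintype (A j)] {H : ℕ} {ρ : ℕ → S → (∀ j, A j) → ℝ}

lemma jointV_of_lt {h : ℕ} (hh : h < H) (s : S) :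
    jointV H P rew ρ h s = ∑ a, ρ h s a * backup P rew h (jointV H P rew ρ (h + 1)) s a := by
  rw [jointV, dif_pos hh]
  rfl

lemma jointV_of_le {h : ℕ} (hh : H ≤ h) (s : S) : jointV H P rew ρ h s = 0 := by
  rw [jointV, dif_neg (not_lt.mpr hh)]

lemma jointV_le_sub (hP : ∀ h < H, ∀ s a, IsDist (P h s a))
    (hrew : ∀ h < H, ∀ s a, rew h s a ≤ 1) (hρ : ∀ h < H, ∀ s, IsDist (ρ h s))
    {h : ℕ} (hh : h ≤ H) (s : S) : jointV H P rew ρ h s ≤ (H : ℝ) - h := by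
  induction hh using Nat.decreasingInduction generalizing s with
  | self => simp [jointV_of_le le_rfl]
  | of_succ k hk ih =>
    rw [jointV_of_lt hk]
    refine (hρ k hk s).sum_mul_le fun a => ?_
    have hnext : ∑ s', P k s a s' * jointV H P rew ρ (k + 1) s' ≤ (H : ℝ) - (k + 1 : ℕ) :=
      (hP k hk s a).sum_mul_le ih
    have := hrew k hk s a
    push_cast at hnext
    simp only [backup]
    linarith

theorem jointV_le_of_min_backup_le (hP : ∀ h < H, ∀ s a, IsDist (P h s a))
    (hrew : ∀ h < H, ∀ s a, rew h s a ≤ 1) (hρ : ∀ h < H, ∀ s, IsDist (ρ h s))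
    {V : ℕ → S → ℝ} (hV_H : ∀ s, 0 ≤ V H s)
    (hV : ∀ h < H, ∀ s,
      min (∑ a, ρ h s a * backup P rew h (V (h + 1)) s a) ((H : ℝ) - h) ≤ V h s)
    {h : ℕ} (hh : h ≤ H) (s : S) : jointV H P rew ρ h s ≤ V h s := by
  induction hh using Nat.decreasingInduction generalizing s with
  | self => simpa [jointV_of_le le_rfl] using hV_H s
  | of_succ k hk ih =>
    refine le_trans (le_min ?_ (jointV_le_sub hP hrew hρ hk.le s)) (hV k hk s)
    rw [jointV_of_lt hk]
    exact sum_le_sum fun a _ =>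
      mul_le_mul_of_nonneg_left (backup_mono (hP k hk s a).1 ih) ((hρ k hk s).1 a)

end Values

theorem statement_0_general {S : Type*} [Fintype S] {m H : ℕ} {A : Fin m → Type*}
    [∀ j, Fintype (A j)]
    (P : ℕ → S → (∀ j, A j) → S → ℝ)
    (hP : ∀ h < H, ∀ s a, IsDist (P h s a))
    (rew : Fin m → ℕ → S → (∀ j, A j) → ℝ)
    (hrew : ∀ i, ∀ h < H, ∀ s a, rew i h s a ∈ Set.Icc (0 : ℝ) 1)
    (π : ℕ → S → (∀ j, A j) → ℝ)
    (hπ : ∀ h < H, ∀ s, IsDist (π h s))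
    (i : Fin m)
    (Vbar : ℕ → S → ℝ) (hVbarH : ∀ s, Vbar H s = 0)
    (G : ℕ → S → ℝ)
    -- (i) per-state no-regret:
    -- `max_{μ ∈ Δ(A_i)} (D_{μ × π_{-i,h}} - D_{π_h})[r_{i,h} + P_h Vbar_{h+1}](s) ≤ G h s`
    (hCCE : ∀ h < H, ∀ s, ∀ μ : A i → ℝ, IsDist μ →
      (∑ a, μ (a i) * marg i (π h s) (restrict i a) *
          (rew i h s a + ∑ s', P h s a s' * Vbar (h + 1) s')) -
        (∑ a, π h s a * (rew i h s a + ∑ s', P h s a s' * Vbar (h + 1) s')) ≤ G h s)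
    -- (ii) optimism:
    -- `Vbar h s ≥ min (D_{π_h}[r_{i,h} + P_h Vbar_{h+1}](s) + G h s) (H - h)`
    (hOpt : ∀ h < H, ∀ s,
      min ((∑ a, π h s a * (rew i h s a + ∑ s', P h s a s' * Vbar (h + 1) s')) + G h s)
          ((H : ℝ) - (h : ℝ)) ≤ Vbar h s) :
    ∀ h < H, ∀ s, ∀ πdag : ℕ → S → A i → ℝ, (∀ h' < H, ∀ s', IsDist (πdag h' s')) →
      jointV H P (rew i)
          (fun h' s' a => πdag h' s' (a i) * marg i (π h' s') (restrict i a)) h s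
        ≤ Vbar h s := by
  intro h hh s πdag hπdag
  refine jointV_le_of_min_backup_le hP (fun h hh s a => (hrew i h hh s a).2)
    (fun h hh s => (hπdag h hh s).prod_marg (hπ h hh s)) (fun s => (hVbarH s).ge)
    (fun k hk s => le_trans (min_le_min_right _ ?_) (hOpt k hk s)) hh.le s
  exact sub_le_iff_le_add'.mp (hCCE k hk s _ (hπdag k hk s))

/-- In a finite Markov game, if the estimates `Vbar` satisfy the
per-state no-regret condition (i) and the optimism condition (ii) with respect to the
bonus functions `G`, then `Vbar` upper bounds the best-response value of player `i`
against `π₋ᵢ`, i.e. `Vbar h s ≥ V^{π_i† × π_{-i}}_{i,h}(s)` for every Markov policy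
`π_i†` of player `i`, every step `h ∈ [H]` and every state `s`. -/
theorem statement_0 {S : Type*} [Fintype S] {m H : ℕ} {A : Fin m → Type*}
    [∀ j, Fintype (A j)]
    (P : ℕ → S → (∀ j, A j) → S → ℝ)
    (hP : ∀ h < H, ∀ s a, IsDist (P h s a))
    (rew : Fin m → ℕ → S → (∀ j, A j) → ℝ)
    (hrew : ∀ i, ∀ h < H, ∀ s a, rew i h s a ∈ Set.Icc (0 : ℝ) 1)
    (π : ℕ → S → (∀ j, A j) → ℝ)
    (hπ : ∀ h < H, ∀ s, IsDist (π h s))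
    (i : Fin m)
    (Vbar : ℕ → S → ℝ) (hVbarH : ∀ s, Vbar H s = 0)
    (G : ℕ → S → ℝ) (hG : ∀ h < H, ∀ s, 0 ≤ G h s)
    -- (i) per-state no-regret:
    -- `max_{μ ∈ Δ(A_i)} (D_{μ × π_{-i,h}} - D_{π_h})[r_{i,h} + P_h Vbar_{h+1}](s) ≤ G h s`
    (hCCE : ∀ h < H, ∀ s, ∀ μ : A i → ℝ, IsDist μ →
      (∑ a, μ (a i) * marg i (π h s) (restrict i a) *
          (rew i h s a + ∑ s', P h s a s' * Vbar (h + 1) s')) -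
        (∑ a, π h s a * (rew i h s a + ∑ s', P h s a s' * Vbar (h + 1) s')) ≤ G h s)
    -- (ii) optimism:
    -- `Vbar h s ≥ min (D_{π_h}[r_{i,h} + P_h Vbar_{h+1}](s) + G h s) (H - h)`
    (hOpt : ∀ h < H, ∀ s,
      min ((∑ a, π h s a * (rew i h s a + ∑ s', P h s a s' * Vbar (h + 1) s')) + G h s)
          ((H : ℝ) - (h : ℝ)) ≤ Vbar h s) :
    ∀ h < H, ∀ s, ∀ πdag : ℕ → S → A i → ℝ, (∀ h' < H, ∀ s', IsDist (πdag h' s')) →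
      jointV H P (rew i)
          (fun h' s' a => πdag h' s' (a i) * marg i (π h' s') (restrict i a)) h s
        ≤ Vbar h s :=
  statement_0_general P hP rew hrew π hπ i Vbar hVbarH G hCCE hOpt
end

section
/- (Separation between Π^Mar-CCE and CCE in the sequential rock–paper–scissors game.) Let H ≥ 2 and consider the two-player zero-sum Markov game with a single state s₀, horizon H, action sets A₁ = A₂ = {R, P, S}, and stage rewards r₁(a₁, a₂) equal to 1 if a₁ beats a₂ (R beats S, P beats R, S beats P), 1/2 if a₁ = a₂, and 0 otherwise, with r₂ = 1 − r₁, the same at every step. Let Λ be the uniform mixture over the three joint policies π^R, π^P, π^S, where under π^a both players deterministically play a at every step; so V₁^Λ := (1/3) Σ_{a} V₁^{π^a} = H/2, and Λ_{-1} denotes the induced opponent process in which, with probability 1/3 each, player 2 plays one fixed action at all H steps. Then: (i) for every Markov policy μ = (μ_h)_{h∈[H]} of player 1 (a sequence of distributions on {R,P,S}), the expected total reward of player 1 against Λ_{-1} equals H/2, and symmetrically for player 2; hence no Markov-policy deviation improves on Λ, i.e., CCEGap^{Π^Mar}(Λ) = 0; (ii) there exists a history-dependent policy of player 1 (choosing its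 step-h action distribution as a function of its own past actions and rewards) whose expected total reward against Λ_{-1} equals H − 1/2; hence CCEGap(Λ) ≥ H/2 − 1/2 ≥ H/4. -/
/-!
Rock–paper–scissors is invariant under the cyclic shift of actions, so every row and every
column of the reward table sums to `3/2`. Hence any Markov policy, whose step-`h` action does
not depend on which constant action the opponent drew, earns `1/2` per step on average.
A history-dependent player, however, learns the opponent's action from its first reward
(its own action and the reward determine the opponent's action) and beats it at every later
step, earning `1/2 + (H - 1)` on average.
-/

open Finset

/-- Player 1's stage reward in rock–paper–scissors, with actions encoded in `ZMod 3`
(`0 = R`, `1 = P`, `2 = S`), so that `a` beats `b` iff `a = b + 1`:  reward `1` if `a`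
beats `b`, `1/2` if `a = b`, and `0` otherwise.  Player 2's reward is `1 - rps a b`. -/
noncomputable def rps (a b : ZMod 3) : ℝ :=
  if a = b + 1 then 1 else if a = b then 1 / 2 else 0

/-- Expected total reward of player 1 from step `h` on (zero-based, horizon `H`) when
player 1 plays the history-dependent policy `σ` (a distribution over actions given the
list of its own past (action, reward) pairs, most recent first) against an opponent who
plays the fixed action `b` at every step. -/
noncomputable def histVal (H : ℕ) (σ : List (ZMod 3 × ℝ) → ZMod 3 → ℝ) (b : ZMod 3) :
    ℕ → List (ZMod 3 × ℝ) → ℝ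
  | h, hist =>
    if _hh : h < H then
      ∑ a : ZMod 3, σ hist a * (rps a b + histVal H σ b (h + 1) ((a, rps a b) :: hist))
    else 0
  termination_by h _ => H - h
  decreasing_by omega

section Rps

lemma rps_add_right (a b c : ZMod 3) : rps (a + c) (b + c) = rps a b := by
  simp only [rps, add_right_comm b c, add_left_inj]

lemma rps_eq_rps_sub_zero (a b : ZMod 3) : rps a b = rps (a - b) 0 := by
  simpa using rps_add_right (a - b) 0 b

lemma rps_zero_zero : rps 0 0 = 1 / 2 := by simp +decide [rps]

lemma rps_one_zero : rps 1 0 = 1 := by simp +decide [rps]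

lemma rps_two_zero : rps 2 0 = 0 := by simp +decide [rps]

lemma sum_rps_col_zero : ∑ d : ZMod 3, rps d 0 = 3 / 2 := by
  rw [show ∑ d : ZMod 3, rps d 0 = rps 0 0 + rps 1 0 + rps 2 0 from Fin.sum_univ_three _,
    rps_zero_zero, rps_one_zero, rps_two_zero]
  norm_num

lemma rps_self (a : ZMod 3) : rps a a = 1 / 2 := by
  rw [rps_eq_rps_sub_zero, sub_self, rps_zero_zero]

lemma rps_add_one_self (b : ZMod 3) : rps (b + 1) b = 1 := by
  rw [rps_eq_rps_sub_zero, add_sub_cancel_left, rps_one_zero]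

lemma sum_rps_row (a : ZMod 3) : ∑ b, rps a b = 3 / 2 := by
  simp_rw [rps_eq_rps_sub_zero a, ← sum_rps_col_zero]
  exact (Equiv.subLeft a).sum_comp (fun d => rps d 0)

lemma sum_rps_col (b : ZMod 3) : ∑ a, rps a b = 3 / 2 := by
  simp_rw [rps_eq_rps_sub_zero _ b, ← sum_rps_col_zero]
  exact (Equiv.subRight b).sum_comp (fun d => rps d 0)

end Rps

section Markov

variable {α β : Type*} [Fintype α] [Fintype β]

lemma sum_sum_range_sum_mul_eq {H : ℕ} {μ : ℕ → α → ℝ} (hμ : ∀ h < H, ∑ a, μ h a = 1)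
    {f : α → β → ℝ} {c : ℝ} (hf : ∀ a, ∑ b, f a b = c) :
    ∑ b, ∑ h ∈ range H, ∑ a, μ h a * f a b = H * c := by
  rw [sum_comm]
  calc ∑ h ∈ range H, ∑ b, ∑ a, μ h a * f a b = ∑ _h ∈ range H, c := by
        refine sum_congr rfl fun h hh => ?_
        simp_rw [sum_comm (s := univ (α := β)), ← mul_sum, hf, ← sum_mul,
          hμ h (mem_range.1 hh), one_mul]
    _ = H * c := by simp

end Markov

section HistoryDependent

variable {H : ℕ} {σ : List (ZMod 3 × ℝ) → ZMod 3 → ℝ} {b : ZMod 3}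

lemma isDist_pi_single {α : Type*} [Fintype α] [DecidableEq α] (x : α) :
    IsDist (Pi.single x 1 : α → ℝ) :=
  ⟨fun a => by rw [Pi.single_apply]; split_ifs <;> norm_num, by simp⟩

lemma histVal_of_le {h : ℕ} (hh : H ≤ h) (hist : List (ZMod 3 × ℝ)) :
    histVal H σ b h hist = 0 := by
  rw [histVal, dif_neg (by omega)]

lemma histVal_of_eq_pi_single {g : List (ZMod 3 × ℝ) → ZMod 3}
    (hσ : ∀ hist, σ hist = Pi.single (g hist) 1) {h : ℕ} (hh : h < H)
    (hist : List (ZMod 3 × ℝ)) :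
    histVal H σ b h hist =
      rps (g hist) b + histVal H σ b (h + 1) ((g hist, rps (g hist) b) :: hist) := by
  rw [histVal, dif_pos hh, hσ]
  simp [Pi.single_apply]

/-- After playing `a`, a reward of `1`, `1/2` or `0` reveals that the opponent played `a - 1`,
`a` or `a + 1`; reply with the action beating that one. -/
noncomputable def counterMove (a : ZMod 3) (r : ℝ) : ZMod 3 :=
  if r = 1 then a else if r = 1 / 2 then a + 1 else a + 2

lemma counterMove_add_right (a c : ZMod 3) (r : ℝ) :
    counterMove (a + c) r = counterMove a r + c := by
  unfold counterMove
  split_ifs <;> ring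

lemma counterMove_rps (a b : ZMod 3) : counterMove a (rps a b) = b + 1 := by
  have key : ∀ d : ZMod 3, counterMove d (rps d 0) = 1 := by
    have hd : ∀ d : ZMod 3, d = 0 ∨ d = 1 ∨ d = 2 := by decide
    intro d
    rcases hd d with rfl | rfl | rfl <;> simp +decide [counterMove, rps]
  rw [rps_eq_rps_sub_zero, ← sub_add_cancel a b, counterMove_add_right, add_sub_cancel_right,
    key, add_comm]

noncomputable def counterAction : List (ZMod 3 × ℝ) → ZMod 3
  | [] => 0
  | (a, r) :: _ => counterMove a r

noncomputable def counterPolicy (hist : List (ZMod 3 × ℝ)) : ZMod 3 → ℝ :=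
  Pi.single (counterAction hist) 1

lemma histVal_counterPolicy_cons {h : ℕ} (hh : h ≤ H) (a : ZMod 3)
    (tail : List (ZMod 3 × ℝ)) :
    histVal H counterPolicy b h ((a, rps a b) :: tail) = H - h := by
  obtain ⟨k, hk⟩ : ∃ k, H = h + k := ⟨H - h, by omega⟩
  induction k generalizing h a tail with
  | zero => rw [histVal_of_le (by omega)]; simp [hk]
  | succ k ih =>
    rw [histVal_of_eq_pi_single (σ := counterPolicy) (g := counterAction) (fun _ => rfl)
      (by omega)]
    simp only [counterAction, counterMove_rps]
    rw [ih (by omega) _ _ (by omega), rps_add_one_self]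
    push_cast
    ring

lemma histVal_counterPolicy (hH : 1 ≤ H) :
    histVal H counterPolicy b 0 [] = rps 0 b + (H - 1) := by
  rw [histVal_of_eq_pi_single (σ := counterPolicy) (g := counterAction) (fun _ => rfl)
    (by omega)]
  simp only [counterAction]
  rw [histVal_counterPolicy_cons hH]
  simp

end HistoryDependent

/-- separation between `Π^Mar`-CCE and CCE in sequential
rock–paper–scissors.  Let `Λ` be the uniform mixture of the three joint policies in
which both players constantly play the same fixed action; its value for player 1 is
`V₁^Λ = (1/3) ∑_a H · rps a a = H/2`, and against `Λ₋₁` the opponent plays one constant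
action for all `H` steps, chosen uniformly among the three.  Then: (i) every Markov
policy `μ` of player 1 has value exactly `H/2` against `Λ₋₁` (and symmetrically for
player 2), so `CCEGap^{Π^Mar}(Λ) = 0`; and (ii) some history-dependent policy `σ` of
player 1 achieves value `H - 1/2` against `Λ₋₁`, whence
`CCEGap(Λ) ≥ (H - 1/2) - H/2 ≥ H/4`. -/
theorem statement_10 (H : ℕ) (hH : 2 ≤ H) :
    -- `V₁^Λ = H/2`
    ((1 / 3 : ℝ) * ∑ a : ZMod 3, (H : ℝ) * rps a a = H / 2) ∧
    -- (i) every Markov deviation of player 1 is worth exactly `H/2`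
    (∀ μ : ℕ → ZMod 3 → ℝ, (∀ h < H, IsDist (μ h)) →
      (1 / 3 : ℝ) * ∑ b : ZMod 3, ∑ h ∈ Finset.range H, ∑ a : ZMod 3, μ h a * rps a b
        = H / 2) ∧
    -- … and symmetrically for player 2 (whose stage reward is `1 - rps b a`)
    (∀ ν : ℕ → ZMod 3 → ℝ, (∀ h < H, IsDist (ν h)) →
      (1 / 3 : ℝ) * ∑ b : ZMod 3, ∑ h ∈ Finset.range H, ∑ a : ZMod 3,
          ν h a * (1 - rps b a) = H / 2) ∧
    -- (ii) a history-dependent deviation of player 1 is worth `H - 1/2`,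
    -- hence `CCEGap(Λ) ≥ H/2 - 1/2 ≥ H/4`
    (∃ σ : List (ZMod 3 × ℝ) → ZMod 3 → ℝ, (∀ hist, IsDist (σ hist)) ∧
      (1 / 3 : ℝ) * ∑ b : ZMod 3, histVal H σ b 0 [] = (H : ℝ) - 1 / 2) ∧
    ((H : ℝ) - 1 / 2) - (H : ℝ) / 2 ≥ (H : ℝ) / 4 := by
  have hH' : (2 : ℝ) ≤ H := by exact_mod_cast hH
  have card_univ : (univ : Finset (ZMod 3)).card = 3 := rfl
  have sum_one_sub_rps (a : ZMod 3) : ∑ b, (1 - rps b a) = 3 / 2 := by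
    rw [sum_sub_distrib, sum_rps_col, sum_const, card_univ]
    norm_num
  refine ⟨?_, fun μ hμ => ?_, fun ν hν => ?_, ⟨counterPolicy, ?_, ?_⟩, by linarith⟩
  · simp only [rps_self, sum_const, card_univ]
    ring
  · rw [sum_sum_range_sum_mul_eq (fun h hh => (hμ h hh).2) sum_rps_row]
    ring
  · rw [sum_sum_range_sum_mul_eq (fun h hh => (hν h hh).2) sum_one_sub_rps]
    ring
  · exact fun hist => isDist_pi_single _
  · simp only [histVal_counterPolicy (by omega : 1 ≤ H), sum_add_distrib, sum_rps_row,
      sum_const, card_univ]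
    ring
end

section
/- (Pigeonhole bound for sequentially weighted harmonic sums.) Let S be a finite set, T ∈ ℕ, ι ≥ 1, and let w^1, …, w^{T+1} be probability distributions on S (so w^t_s ≥ 0 and Σ_{s∈S} w^t_s = 1 for each t). Define W^t_s := Σ_{τ=1}^t w^τ_s. Then Σ_{t=1}^{T} Σ_{s∈S} w^{t+1}_s / ( W^t_s + ι ) ≤ 2 |S| log( 1 + (T+1)/ι ). -/
/-!
Fix a state `s` and put `A_t := W^t_s + ι`. Then `A_{t+1} - A_t = w^{t+1}_s ∈ [0, 1]` and
`A_t ≥ ι ≥ 1`, so each ratio `x = (A_{t+1} - A_t) / A_t` lies in `[0, 1]`, where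
`x ≤ 2 log (1 + x)`. Hence the sum over `t` telescopes to at most
`2 (log A_{T+1} - log A_1) ≤ 2 log ((T + 1 + ι) / ι)`, and summing over `s` gives the factor `|S|`.
-/

open Finset Real

lemma half_le_log_one_add {x : ℝ} (hx0 : 0 ≤ x) (hx2 : x ≤ 2) : x / 2 ≤ log (1 + x) :=
  calc x / 2 ≤ 2 * x / (x + 2) := by
        rw [div_le_div_iff₀ two_pos (by linarith)]; nlinarith
    _ ≤ log (1 + x) := le_log_one_add_of_nonneg hx0

lemma sub_div_le_two_mul_log_sub_log {a b : ℝ} (ha : 0 < a) (hab : a ≤ b) (hb : b ≤ 3 * a) :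
    (b - a) / a ≤ 2 * (log b - log a) := by
  have h := half_le_log_one_add (div_nonneg (sub_nonneg.2 hab) ha.le)
    ((div_le_iff₀ ha).2 (by linarith))
  rw [← log_div (by linarith) ha.ne', show b / a = 1 + (b - a) / a by field_simp; ring]
  linarith

lemma sum_Ico_sub_div_le_two_mul_log {A : ℕ → ℝ} {m n : ℕ} (hmn : m ≤ n)
    (hpos : ∀ t ∈ Ico m n, 0 < A t) (hmono : ∀ t ∈ Ico m n, A t ≤ A (t + 1))
    (hgrowth : ∀ t ∈ Ico m n, A (t + 1) ≤ 3 * A t) :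
    ∑ t ∈ Ico m n, (A (t + 1) - A t) / A t ≤ 2 * (log (A n) - log (A m)) :=
  calc ∑ t ∈ Ico m n, (A (t + 1) - A t) / A t
      ≤ ∑ t ∈ Ico m n, 2 * (log (A (t + 1)) - log (A t)) := sum_le_sum fun t ht =>
        sub_div_le_two_mul_log_sub_log (hpos t ht) (hmono t ht) (hgrowth t ht)
    _ = 2 * (log (A n) - log (A m)) := by rw [← mul_sum, sum_Ico_sub (fun t => log (A t)) hmn]

lemma sum_div_partial_sum_add_le_two_mul_log {v : ℕ → ℝ} {T : ℕ} {ι : ℝ} (hι : 1 ≤ ι)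
    (hv0 : ∀ t ∈ Icc 1 (T + 1), 0 ≤ v t) (hv1 : ∀ t ∈ Icc 1 (T + 1), v t ≤ 1) :
    ∑ t ∈ Icc 1 T, v (t + 1) / (∑ τ ∈ Icc 1 t, v τ + ι) ≤ 2 * log (1 + (T + 1) / ι) := by
  set A : ℕ → ℝ := fun t => ∑ τ ∈ Icc 1 t, v τ + ι with hA
  have hA_succ (t : ℕ) : A (t + 1) = A t + v (t + 1) := by
    simp only [hA, sum_Icc_succ_top (Nat.le_add_left 1 t)]; ring
  have hA_ge (t : ℕ) (ht : t ≤ T + 1) : ι ≤ A t :=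
    le_add_of_nonneg_left <| sum_nonneg fun τ hτ =>
      hv0 τ (Icc_subset_Icc_right ht hτ)
  have hA_le : A (T + 1) ≤ T + 1 + ι := by
    have hv_sum : ∑ τ ∈ Icc 1 (T + 1), v τ ≤ T + 1 := by
      simpa using sum_le_card_nsmul _ _ _ hv1
    exact add_le_add_left hv_sum ι
  have hv0' (t : ℕ) (ht : t ∈ Ico 1 (T + 1)) : 0 ≤ v (t + 1) := hv0 _ (by simp at ht ⊢; omega)
  have hv1' (t : ℕ) (ht : t ∈ Ico 1 (T + 1)) : v (t + 1) ≤ 1 := hv1 _ (by simp at ht ⊢; omega)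
  have hA_ge' (t : ℕ) (ht : t ∈ Ico 1 (T + 1)) : ι ≤ A t := hA_ge t (by simp at ht; omega)
  calc ∑ t ∈ Icc 1 T, v (t + 1) / (∑ τ ∈ Icc 1 t, v τ + ι)
      = ∑ t ∈ Ico 1 (T + 1), (A (t + 1) - A t) / A t := by
        rw [Ico_add_one_right_eq_Icc]
        exact sum_congr rfl fun t _ => by rw [hA_succ, add_sub_cancel_left]
    _ ≤ 2 * (log (A (T + 1)) - log (A 1)) := by
        refine sum_Ico_sub_div_le_two_mul_log (by omega) (fun t ht => ?_) (fun t ht => ?_)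
          (fun t ht => ?_)
        · linarith [hA_ge' t ht]
        · linarith [hA_succ t, hv0' t ht]
        · linarith [hA_succ t, hv1' t ht, hA_ge' t ht]
    _ ≤ 2 * (log (T + 1 + ι) - log ι) := by
        have hι0 : 0 < ι := by linarith
        gcongr 2 * (?_ - ?_)
        · exact log_le_log (hι0.trans_le (hA_ge _ le_rfl)) hA_le
        · exact log_le_log hι0 (hA_ge 1 (by omega))
    _ = 2 * log (1 + (T + 1) / ι) := by
        rw [← log_div (by positivity) (by positivity)]
        congr 2
        field_simp
        ring

/-- pigeonhole bound for sequentially weighted harmonic sums.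
If `w^1, …, w^{T+1}` are probability distributions on a finite set `S`,
`W^t_s := ∑_{τ=1}^t w^τ_s`, and `ι ≥ 1`, then
`∑_{t=1}^{T} ∑_{s ∈ S} w^{t+1}_s / (W^t_s + ι) ≤ 2 |S| log(1 + (T+1)/ι)`. -/
theorem statement_11 {S : Type*} [Fintype S] (T : ℕ) (ι : ℝ) (hι : 1 ≤ ι)
    (w : ℕ → S → ℝ)
    (hw : ∀ t, 1 ≤ t → t ≤ T + 1 → (∀ s, 0 ≤ w t s) ∧ (∑ s, w t s) = 1) :
    ∑ t ∈ Finset.Icc 1 T, ∑ s, w (t + 1) s / ((∑ τ ∈ Finset.Icc 1 t, w τ s) + ι)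
      ≤ 2 * (Fintype.card S) * Real.log (1 + (T + 1) / ι) := by
  have hw_prob (t : ℕ) (ht : t ∈ Icc 1 (T + 1)) := hw t (mem_Icc.1 ht).1 (mem_Icc.1 ht).2
  have hw_le_one (s : S) (t : ℕ) (ht : t ∈ Icc 1 (T + 1)) : w t s ≤ 1 :=
    (hw_prob t ht).2 ▸ single_le_sum (fun s' _ => (hw_prob t ht).1 s') (mem_univ s)
  rw [sum_comm]
  calc ∑ s, ∑ t ∈ Icc 1 T, w (t + 1) s / (∑ τ ∈ Icc 1 t, w τ s + ι)
      ≤ ∑ _s : S, 2 * log (1 + (T + 1) / ι) := sum_le_sum fun s _ =>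
        sum_div_partial_sum_add_le_two_mul_log hι (fun t ht => (hw_prob t ht).1 s) (hw_le_one s)
    _ = 2 * Fintype.card S * log (1 + (T + 1) / ι) := by
        rw [sum_const, card_univ, nsmul_eq_mul]; ring
end

section
/- (Elliptic potential lemma for positive semidefinite increments.) Let d ∈ ℕ, λ₀ ≥ 1, T ∈ ℕ, and let X_1, …, X_{T+1} be d×d real symmetric positive semidefinite matrices with Tr(X_t) ≤ 1 for all t. Define S_t := λ₀ I + Σ_{τ=1}^t X_τ. Then Σ_{t=1}^{T} Tr( X_{t+1} S_t^{−1} ) ≤ 2 d log( 1 + (T+1)/λ₀ ). -/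
/-! Write `S_t` for the regularised design matrix. Factoring `X = Yᴴ Y`, the Weinstein–Aronszajn
identity turns `det (S + X) / det S = det (1 + S⁻¹ X)` into `det (1 + Y S⁻¹ Yᴴ)`, the determinant of
`1` plus a positive semidefinite matrix of trace `u = tr (X S⁻¹)`, which is at least `1 + u`.
Since `S_t ≥ 1` we have `S_t⁻¹ ≤ 1`, so `u ≤ tr X ≤ 1`, and on `[0, 1]` we have `u ≤ 2 log (1 + u)`.
Hence each term is at most `2 (log det S_{t+1} - log det S_t)`; the sum telescopes, and
`det S_{T+1} ≤ (λ₀ + T + 1)^d` because no eigenvalue of `∑ X_τ` exceeds its trace `≤ T + 1`. -/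

open Finset Matrix
open scoped MatrixOrder

lemma Finset.one_add_sum_le_prod_one_add {ι : Type*} (s : Finset ι) {f : ι → ℝ}
    (hf : ∀ i ∈ s, 0 ≤ f i) : 1 + ∑ i ∈ s, f i ≤ ∏ i ∈ s, (1 + f i) := by
  induction s using Finset.cons_induction with
  | empty => simp
  | cons a s _ ih =>
    rw [sum_cons, prod_cons]
    have hfa : 0 ≤ f a := hf a (mem_cons_self a s)
    have hsum : 0 ≤ ∑ i ∈ s, f i := sum_nonneg fun i hi => hf i (mem_cons_of_mem hi)
    have ih := ih fun i hi => hf i (mem_cons_of_mem hi)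
    nlinarith

namespace Matrix

variable {n : Type*} [Fintype n] [DecidableEq n]

lemma PosSemidef.trace_mul_nonneg {A B : Matrix n n ℝ} (hA : A.PosSemidef) (hB : B.PosSemidef) :
    0 ≤ (A * B).trace := by
  obtain ⟨Y, rfl⟩ := CStarAlgebra.nonneg_iff_eq_star_mul_self.mp hA.nonneg
  rw [Matrix.mul_assoc, trace_mul_comm]
  simpa [Matrix.mul_assoc, star_eq_conjTranspose] using
    (hB.mul_mul_conjTranspose_same Y).trace_nonneg

omit [Fintype n] in
lemma posDef_of_one_le {S : Matrix n n ℝ} (h : 1 ≤ S) : S.PosDef := by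
  simpa using PosDef.one.add_posSemidef h

lemma inv_le_one_of_one_le {S : Matrix n n ℝ} (h : 1 ≤ S) : S⁻¹ ≤ 1 := by
  have hS := posDef_of_one_le h
  have hspec : ∀ x ∈ spectrum ℝ S, 1 ≤ x :=
    (algebraMap_le_iff_le_spectrum (r := (1 : ℝ)) hS.isHermitian).mp (by simpa using h)
  have hinv : S⁻¹ = cfc (·⁻¹ : ℝ → ℝ) S := by
    have := cfc_inv_id (R := ℝ) hS.isUnit.unit hS.isHermitian
    rw [IsUnit.unit_spec, coe_units_inv] at this
    exact this.symm
  rw [hinv]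
  exact cfc_le_one _ _ fun x hx => inv_le_one_of_one_le₀ (hspec x hx)

lemma trace_mul_inv_le_trace {S X : Matrix n n ℝ} (hS : 1 ≤ S) (hX : X.PosSemidef) :
    (X * S⁻¹).trace ≤ X.trace := by
  have := hX.trace_mul_nonneg (le_iff.mp (inv_le_one_of_one_le hS))
  rwa [Matrix.mul_sub, Matrix.mul_one, trace_sub, sub_nonneg] at this

lemma IsHermitian.det_smul_one_add {M : Matrix n n ℝ} (hM : M.IsHermitian) (c : ℝ) :
    (c • 1 + M).det = ∏ i, (c + hM.eigenvalues i) := by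
  have : c • 1 + M = cfc (c + ·) M := by
    rw [cfc_const_add c (fun x => x) M (ha := hM.isSelfAdjoint), cfc_id' ℝ M hM.isSelfAdjoint,
      Algebra.algebraMap_eq_smul_one]
  rw [this, hM.cfc_eq, IsHermitian.cfc]
  simp [-Unitary.conjStarAlgAut_apply]

lemma PosSemidef.one_add_trace_le_det_one_add {M : Matrix n n ℝ} (hM : M.PosSemidef) :
    1 + M.trace ≤ (1 + M).det := by
  rw [← one_smul ℝ (1 : Matrix n n ℝ), hM.isHermitian.det_smul_one_add,
    hM.isHermitian.trace_eq_sum_eigenvalues]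
  exact one_add_sum_le_prod_one_add _ fun i _ => hM.eigenvalues_nonneg i

lemma PosSemidef.det_smul_one_add_le {M : Matrix n n ℝ} (hM : M.PosSemidef) {c : ℝ}
    (hc : 0 ≤ c) : (c • 1 + M).det ≤ (c + M.trace) ^ Fintype.card n := by
  rw [hM.isHermitian.det_smul_one_add, hM.isHermitian.trace_eq_sum_eigenvalues, ← card_univ,
    ← prod_const]
  refine prod_le_prod (fun i _ => add_nonneg hc (hM.eigenvalues_nonneg i)) fun i _ => ?_
  exact (add_le_add_iff_left c).mpr
    (single_le_sum (fun j _ => hM.eigenvalues_nonneg j) (mem_univ i))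

lemma PosDef.one_add_trace_mul_inv_mul_det_le_det_add {S X : Matrix n n ℝ} (hS : S.PosDef)
    (hX : X.PosSemidef) : (1 + (X * S⁻¹).trace) * S.det ≤ (S + X).det := by
  obtain ⟨Y, rfl⟩ := CStarAlgebra.nonneg_iff_eq_star_mul_self.mp hX.nonneg
  have hM : (Y * S⁻¹ * star Y).PosSemidef := hS.inv.posSemidef.mul_mul_conjTranspose_same Y
  have htrace : (star Y * Y * S⁻¹).trace = (Y * S⁻¹ * star Y).trace := by
    rw [Matrix.mul_assoc, trace_mul_comm]
  have hdet : (S + star Y * Y).det = S.det * (1 + Y * S⁻¹ * star Y).det := by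
    have hfactor : S + star Y * Y = S * (1 + S⁻¹ * star Y * Y) := by
      rw [Matrix.mul_add, Matrix.mul_one, ← Matrix.mul_assoc, ← Matrix.mul_assoc,
        mul_nonsing_inv _ ((isUnit_iff_isUnit_det S).mp hS.isUnit), Matrix.one_mul]
    rw [hfactor, det_mul, det_one_add_mul_comm, ← Matrix.mul_assoc]
  rw [hdet, htrace, mul_comm]
  exact mul_le_mul_of_nonneg_left hM.one_add_trace_le_det_one_add hS.det_pos.le

lemma trace_mul_inv_le_two_mul_log_det_add_sub_log_det {S X : Matrix n n ℝ} (hS : 1 ≤ S)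
    (hX : X.PosSemidef) (htr : X.trace ≤ 1) :
    (X * S⁻¹).trace ≤ 2 * (Real.log (S + X).det - Real.log S.det) := by
  have hSpos := posDef_of_one_le hS
  set u := (X * S⁻¹).trace
  have hu0 : 0 ≤ u := hX.trace_mul_nonneg hSpos.inv.posSemidef
  have hu1 : u ≤ 1 := (trace_mul_inv_le_trace hS hX).trans htr
  have hlog : Real.log (1 + u) ≤ Real.log (S + X).det - Real.log S.det := by
    rw [le_sub_iff_add_le, ← Real.log_mul (by positivity) hSpos.det_pos.ne']
    exact Real.log_le_log (mul_pos (by positivity) hSpos.det_pos)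
      (hSpos.one_add_trace_mul_inv_mul_det_le_det_add hX)
  calc u ≤ 2 * (2 * u / (u + 2)) := by
        rw [mul_div_assoc', le_div_iff₀ (by positivity)]
        nlinarith
    _ ≤ 2 * Real.log (1 + u) := by gcongr; exact Real.le_log_one_add_of_nonneg hu0
    _ ≤ 2 * (Real.log (S + X).det - Real.log S.det) := by gcongr

end Matrix

section DesignMatrix

variable {n : Type*} [DecidableEq n]

def designMatrix (lam0 : ℝ) (X : ℕ → Matrix n n ℝ) (t : ℕ) : Matrix n n ℝ :=
  lam0 • 1 + ∑ τ ∈ Icc 1 t, X τ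

variable {lam0 : ℝ} {X : ℕ → Matrix n n ℝ}

lemma designMatrix_zero : designMatrix lam0 X 0 = lam0 • 1 := by
  simp [designMatrix]

lemma designMatrix_succ (t : ℕ) :
    designMatrix lam0 X (t + 1) = designMatrix lam0 X t + X (t + 1) := by
  rw [designMatrix, designMatrix, sum_Icc_succ_top (Nat.le_add_left 1 t), add_assoc]

lemma one_le_designMatrix (hlam : 1 ≤ lam0) {t : ℕ} (hX : ∀ τ ∈ Icc 1 t, (X τ).PosSemidef) :
    1 ≤ designMatrix lam0 X t := by
  have hsmul : (1 : Matrix n n ℝ) ≤ lam0 • 1 := by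
    rw [le_iff, show lam0 • (1 : Matrix n n ℝ) - 1 = (lam0 - 1) • 1 by rw [sub_smul, one_smul]]
    exact PosSemidef.one.smul (sub_nonneg.mpr hlam)
  exact le_add_of_le_of_nonneg hsmul (posSemidef_sum _ hX).nonneg

variable [Fintype n]

lemma trace_mul_inv_designMatrix_nonneg (hlam : 1 ≤ lam0) {t N : ℕ} (ht : t < N)
    (hX : ∀ τ ∈ Icc 1 N, (X τ).PosSemidef) :
    0 ≤ (X (t + 1) * (designMatrix lam0 X t)⁻¹).trace :=
  (hX (t + 1) (mem_Icc.mpr ⟨by omega, ht⟩)).trace_mul_nonneg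
    (posDef_of_one_le (one_le_designMatrix hlam fun τ hτ =>
      hX τ (Icc_subset_Icc_right ht.le hτ))).inv.posSemidef

lemma sum_range_trace_mul_inv_designMatrix_le (hlam : 1 ≤ lam0) {N : ℕ}
    (hX : ∀ t ∈ Icc 1 N, (X t).PosSemidef) (htr : ∀ t ∈ Icc 1 N, (X t).trace ≤ 1) :
    ∑ t ∈ range N, (X (t + 1) * (designMatrix lam0 X t)⁻¹).trace ≤
      2 * (Real.log (designMatrix lam0 X N).det - Real.log (designMatrix lam0 X 0).det) := by
  rw [← sum_range_sub (fun t => Real.log (designMatrix lam0 X t).det), mul_sum]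
  refine sum_le_sum fun t ht => ?_
  have hsucc : t + 1 ∈ Icc 1 N := mem_Icc.mpr ⟨by omega, mem_range.mp ht⟩
  rw [designMatrix_succ]
  exact trace_mul_inv_le_two_mul_log_det_add_sub_log_det
    (one_le_designMatrix hlam fun τ hτ => hX τ (Icc_subset_Icc_right (mem_range.mp ht).le hτ))
    (hX _ hsucc) (htr _ hsucc)

lemma log_det_designMatrix_sub_log_det_zero_le (hlam : 0 < lam0) {N : ℕ}
    (hX : ∀ t ∈ Icc 1 N, (X t).PosSemidef) (htr : ∀ t ∈ Icc 1 N, (X t).trace ≤ 1) :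
    Real.log (designMatrix lam0 X N).det - Real.log (designMatrix lam0 X 0).det ≤
      Fintype.card n * Real.log (1 + N / lam0) := by
  have hP := posSemidef_sum (Icc 1 N) hX
  have htrP : (∑ τ ∈ Icc 1 N, X τ).trace ≤ N := by
    rw [trace_sum]
    simpa using sum_le_sum htr
  have hdet : (designMatrix lam0 X N).det ≤ (lam0 + N) ^ Fintype.card n :=
    (hP.det_smul_one_add_le hlam.le).trans
      (pow_le_pow_left₀ (add_nonneg hlam.le hP.trace_nonneg) (by linarith) _)
  have hpos : 0 < (designMatrix lam0 X N).det :=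
    ((PosDef.one.smul hlam).add_posSemidef hP).det_pos
  have hlog : Real.log (designMatrix lam0 X N).det ≤ Fintype.card n * Real.log (lam0 + N) := by
    rw [← Real.log_pow]
    exact Real.log_le_log hpos hdet
  have hratio : Real.log (1 + N / lam0) = Real.log (lam0 + N) - Real.log lam0 := by
    rw [← Real.log_div (by positivity) hlam.ne', add_div, div_self hlam.ne']
  rw [designMatrix_zero, det_smul, det_one, mul_one, Real.log_pow, hratio]
  linarith

end DesignMatrix

/-- elliptic potential lemma for positive semidefinite increments.
If `X_1, …, X_{T+1}` are `d × d` real symmetric positive semidefinite matrices with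
`Tr(X_t) ≤ 1`, and `S_t := λ₀ I + ∑_{τ=1}^t X_τ` with `λ₀ ≥ 1`, then
`∑_{t=1}^{T} Tr(X_{t+1} S_t⁻¹) ≤ 2 d log(1 + (T+1)/λ₀)`. -/
theorem statement_12 (d : ℕ) (lam0 : ℝ) (hlam : 1 ≤ lam0) (T : ℕ)
    (X : ℕ → Matrix (Fin d) (Fin d) ℝ)
    (hX : ∀ t, 1 ≤ t → t ≤ T + 1 → (X t).PosSemidef)
    (htr : ∀ t, 1 ≤ t → t ≤ T + 1 → (X t).trace ≤ 1) :
    ∑ t ∈ Finset.Icc 1 T,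
        (X (t + 1) *
          (lam0 • (1 : Matrix (Fin d) (Fin d) ℝ) + ∑ τ ∈ Finset.Icc 1 t, X τ)⁻¹).trace
      ≤ 2 * d * Real.log (1 + (T + 1) / lam0) := by
  have hX' : ∀ t ∈ Icc 1 (T + 1), (X t).PosSemidef := fun t ht =>
    hX t (mem_Icc.mp ht).1 (mem_Icc.mp ht).2
  have htr' : ∀ t ∈ Icc 1 (T + 1), (X t).trace ≤ 1 := fun t ht =>
    htr t (mem_Icc.mp ht).1 (mem_Icc.mp ht).2
  have hpotential := log_det_designMatrix_sub_log_det_zero_le (by linarith) hX' htr'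
  rw [Fintype.card_fin] at hpotential
  push_cast at hpotential
  calc ∑ t ∈ Icc 1 T, (X (t + 1) * (designMatrix lam0 X t)⁻¹).trace
      ≤ ∑ t ∈ range (T + 1), (X (t + 1) * (designMatrix lam0 X t)⁻¹).trace :=
        sum_le_sum_of_subset_of_nonneg
          (fun t ht => mem_range.mpr (Nat.lt_succ_of_le (mem_Icc.mp ht).2)) fun t ht _ => trace_mul_inv_designMatrix_nonneg hlam (mem_range.mp ht) hX'
    _ ≤ 2 * (Real.log (designMatrix lam0 X (T + 1)).det -
          Real.log (designMatrix lam0 X 0).det) :=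
        sum_range_trace_mul_inv_designMatrix_le hlam hX' htr'
    _ ≤ 2 * d * Real.log (1 + (T + 1) / lam0) := by linarith
end

section
/- (Regret guarantee for Decentralized Optimistic Policy Mirror Descent given optimistic value estimates; Proposition on DOPMD regret.) Let MG be an m-player finite Markov game, and for each i ∈ [m] let Π_i be a finite set of Markov policies of player i. Fix T ∈ ℕ, ε ≥ 0, δ ∈ (0,1), and set η_i := √( log|Π_i| / (H² T) ). Consider any stochastic process in which: Λ_i^1 is uniform on Π_i; at each round t ∈ [T], conditionally on the history F_{t−1}, each player samples π_i^t ∼ Λ_i^t independently across i; then random estimates { V̄_i^{(t), π_i} }_{i∈[m], π_i∈Π_i} are generated (measurably, possibly using fresh randomness) which almost surely satisfy, for all i and π_i ∈ Π_i, V_{i,1}^{π_i × π^t_{-i}}(s_1) ≤ V̄_i^{(t), π_i} ≤ V_{i,1}^{π_i × π^t_{-i}}(s_1) + ε and V̄_i^{(t), π_i} ∈ [0, H]; and the mixtures are updated by Λ_i^{t+1}(π_i) ∝ Λ_i^t(π_i) · exp( η_i · V̄_i^{(t), π_i} ). Then there is a universal constant C such that with probability at least 1−δ: max_{i∈[m]}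 max_{π_i ∈ Π_i} Σ_{t=1}^T [ V^{π_i × Λ^t_{-i}}_{i,1}(s_1) − V^{Λ^t}_{i,1}(s_1) ] ≤ ε T + C · H √( T · log( Σ_{i∈[m]} |Π_i| / δ ) ). -/
/-!
Only the values `V_i(π)` of policy profiles enter, so the Markov game is a normal-form game on
the finite classes `Π_i` with payoffs in `[0, H]`. Since resampling one coordinate does not change
a product distribution, the round-`t` regret of player `i` against `Λ^t` for a deviation `π_i` is
the `Λ^t`-mean of the deviation gain `V_i(π_i × π_{-i}) - Σ_{π'} Λ_i^t(π') V_i(π' × π_{-i})`.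
This is the gain realised at the sampled profile `π^t` plus a martingale difference bounded by
`2H`. Optimism bounds the sum of the realised gains by `εT` plus the exponential-weights regret on
the estimates, which is at most `2H√(T log|Π_i|)`. Azuma–Hoeffding and a union bound over the
`Σ_i |Π_i|` deviations bound the martingale part by `2H√(2T log(Σ_i |Π_i| / δ))`, whence `C = 5`.
-/

open MeasureTheory Finset

/-- The joint (product) policy obtained from one Markov policy per player. -/
noncomputable def prodPol {S : Type*} {m : ℕ} {A : Fin m → Type*}
    [∀ j, Fintype (A j)] (p : ∀ j, ℕ → S → A j → ℝ) : ℕ → S → (∀ j, A j) → ℝ :=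
  fun h s a => ∏ j, p j h s (a j)

namespace IsDist

variable {α : Type*} [Fintype α] {p : α → ℝ}

theorem sum_mul_mem_Icc (hp : IsDist p) {f : α → ℝ} {a b : ℝ} (hf : ∀ x, f x ∈ Set.Icc a b) :
    ∑ x, p x * f x ∈ Set.Icc a b := by
  have hconst : ∀ c : ℝ, ∑ x, p x * c = c := fun c => by rw [← Finset.sum_mul, hp.2, one_mul]
  refine ⟨?_, ?_⟩
  · calc a = ∑ x, p x * a := (hconst a).symm
      _ ≤ ∑ x, p x * f x := by gcongr with x; exacts [hp.1 x, (hf x).1]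
  · calc ∑ x, p x * f x ≤ ∑ x, p x * b := by gcongr with x; exacts [hp.1 x, (hf x).2]
      _ = b := hconst b

theorem le_one (hp : IsDist p) (x : α) : p x ≤ 1 :=
  hp.2 ▸ Finset.single_le_sum (fun y _ => hp.1 y) (Finset.mem_univ x)

theorem pi {ι : Type*} [Fintype ι] [DecidableEq ι] {A : ι → Type*} [∀ i, Fintype (A i)]
    {w : ∀ i, A i → ℝ} (hw : ∀ i, IsDist (w i)) : IsDist fun a : ∀ i, A i => ∏ i, w i (a i) :=
  ⟨fun a => Finset.prod_nonneg fun i _ => (hw i).1 (a i), by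
    rw [← Fintype.prod_sum]; exact Finset.prod_eq_one fun i _ => (hw i).2⟩

end IsDist

theorem jointV_mem_Icc {S : Type*} [Fintype S] {m : ℕ} {A : Fin m → Type*}
    [∀ j, Fintype (A j)] {H : ℕ} {P : ℕ → S → (∀ j, A j) → S → ℝ}
    {rew : ℕ → S → (∀ j, A j) → ℝ} {π : ℕ → S → (∀ j, A j) → ℝ}
    (hP : ∀ h < H, ∀ s a, IsDist (P h s a)) (hrew : ∀ h < H, ∀ s a, rew h s a ∈ Set.Icc (0 : ℝ) 1)
    (hπ : ∀ h < H, ∀ s, IsDist (π h s)) (h : ℕ) (s : S) :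
    jointV H P rew π h s ∈ Set.Icc (0 : ℝ) (H - h : ℕ) := by
  rw [jointV]
  split_ifs with hh
  · refine (hπ h hh s).sum_mul_mem_Icc fun a => ?_
    have hnext := (hP h hh s a).sum_mul_mem_Icc fun s' =>
      jointV_mem_Icc hP hrew hπ (h + 1) s'
    have hH : ((H - (h + 1) : ℕ) : ℝ) + 1 = (H - h : ℕ) := by norm_cast; omega
    constructor <;> linarith [(hrew h hh s a).1, (hrew h hh s a).2, hnext.1, hnext.2]
  · simp
termination_by H - h

section ExponentialWeights

variable {K : Type*} [Fintype K]

theorem log_sum_mul_exp_le {p x : K → ℝ} (hp : IsDist p) {b : ℝ} (hb : b ≤ 1)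
    (hx : ∀ k, x k ∈ Set.Icc 0 b) :
    Real.log (∑ k, p k * Real.exp (x k)) ≤ ∑ k, p k * x k + b ^ 2 := by
  have hexp : ∀ k, Real.exp (x k) ≤ 1 + x k + b ^ 2 := fun k => by
    have h := Real.abs_exp_sub_one_sub_id_le (x := x k)
      (by rw [abs_of_nonneg (hx k).1]; linarith [(hx k).2])
    nlinarith [abs_le.1 h, (hx k).1, (hx k).2]
  have hpos : 1 ≤ ∑ k, p k * Real.exp (x k) :=
    (hp.sum_mul_mem_Icc (a := 1) (b := Real.exp b) fun k =>
      ⟨Real.one_le_exp (hx k).1, Real.exp_le_exp.2 (hx k).2⟩).1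
  calc Real.log (∑ k, p k * Real.exp (x k)) ≤ ∑ k, p k * Real.exp (x k) - 1 :=
        Real.log_le_sub_one_of_pos (by linarith)
    _ ≤ ∑ k, p k * (1 + x k + b ^ 2) - 1 := by gcongr with k; exacts [hp.1 k, hexp k]
    _ = ∑ k, p k * x k + b ^ 2 := by
        simp only [mul_add, Finset.sum_add_distrib, ← Finset.sum_mul, hp.2]; ring

def IsExpWeights (η : ℝ) (v w : ℕ → K → ℝ) : Prop :=
  (∀ q, w 1 q = 1 / (Fintype.card K : ℝ)) ∧ ∀ t, 1 ≤ t → ∀ q,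
    w (t + 1) q = w t q * Real.exp (η * v t q) / ∑ q', w t q' * Real.exp (η * v t q')

namespace IsExpWeights

variable [Nonempty K] {η : ℝ} {v w : ℕ → K → ℝ}

theorem pos_and_sum_eq_one (hw : IsExpWeights η v w) {t : ℕ} (ht : 1 ≤ t) :
    (∀ q, 0 < w t q) ∧ ∑ q, w t q = 1 := by
  induction t, ht using Nat.le_induction with
  | base => simp [hw.1, Fintype.card_pos]
  | succ t ht ih =>
    have hZ : 0 < ∑ q', w t q' * Real.exp (η * v t q') :=
      Finset.sum_pos (fun q _ => by have := ih.1 q; positivity) Finset.univ_nonempty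
    refine ⟨fun q => ?_, ?_⟩
    · rw [hw.2 t ht q]; have := ih.1 q; positivity
    · simp only [hw.2 t ht, ← Finset.sum_div, div_self hZ.ne']

theorem isDist (hw : IsExpWeights η v w) {t : ℕ} (ht : 1 ≤ t) : IsDist (w t) :=
  ⟨fun q => ((hw.pos_and_sum_eq_one ht).1 q).le, (hw.pos_and_sum_eq_one ht).2⟩

theorem log_eq (hw : IsExpWeights η v w) (T : ℕ) (q : K) :
    Real.log (w (T + 1) q) = -Real.log (Fintype.card K) +
      ∑ t ∈ Icc 1 T, (η * v t q - Real.log (∑ q', w t q' * Real.exp (η * v t q'))) := by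
  induction T with
  | zero => simp [hw.1]
  | succ T ih =>
    have hpos := hw.pos_and_sum_eq_one (Nat.le_add_left 1 T)
    have hZ : 0 < ∑ q', w (T + 1) q' * Real.exp (η * v (T + 1) q') :=
      Finset.sum_pos (fun q _ => by have := hpos.1 q; positivity) Finset.univ_nonempty
    rw [hw.2 (T + 1) (Nat.le_add_left 1 T), Real.log_div (by have := hpos.1 q; positivity) hZ.ne',
      Real.log_mul (hpos.1 q).ne' (Real.exp_pos _).ne', Real.log_exp, ih,
      Finset.sum_Icc_succ_top (Nat.le_add_left 1 T)]
    ring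

theorem regret_le (hw : IsExpWeights η v w) {T : ℕ} {B : ℝ} (hη : 0 ≤ η) (hηB : η * B ≤ 1)
    (hv : ∀ t ∈ Icc 1 T, ∀ q, v t q ∈ Set.Icc 0 B) (q : K) :
    η * ∑ t ∈ Icc 1 T, (v t q - ∑ q', w t q' * v t q') ≤
      Real.log (Fintype.card K) + T * (η * B) ^ 2 := by
  have hlogZ : ∀ t ∈ Icc 1 T, Real.log (∑ q', w t q' * Real.exp (η * v t q')) ≤
      η * ∑ q', w t q' * v t q' + (η * B) ^ 2 := fun t ht => by
    have := log_sum_mul_exp_le (hw.isDist (Finset.mem_Icc.1 ht).1) hηB fun q' =>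
      ⟨mul_nonneg hη (hv t ht q').1, mul_le_mul_of_nonneg_left (hv t ht q').2 hη⟩
    simpa only [Finset.mul_sum, mul_left_comm] using this
  have hlog_le : Real.log (w (T + 1) q) ≤ 0 :=
    Real.log_nonpos ((hw.pos_and_sum_eq_one (Nat.le_add_left 1 T)).1 q).le
      ((hw.isDist (Nat.le_add_left 1 T)).le_one q)
  have hsum := Finset.sum_le_sum hlogZ
  rw [Finset.sum_add_distrib, Finset.sum_const, Nat.card_Icc, Nat.add_sub_cancel,
    nsmul_eq_mul, ← Finset.mul_sum] at hsum
  rw [hw.log_eq, Finset.sum_sub_distrib, ← Finset.mul_sum] at hlog_le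
  rw [Finset.sum_sub_distrib]
  linarith

theorem regret_le_two_mul_sqrt {B : ℝ} (hB : 0 < B) {T : ℕ}
    (hw : IsExpWeights (Real.sqrt (Real.log (Fintype.card K) / (B ^ 2 * T))) v w)
    (hv : ∀ t ∈ Icc 1 T, ∀ q, v t q ∈ Set.Icc 0 B) (q : K) :
    ∑ t ∈ Icc 1 T, (v t q - ∑ q', w t q' * v t q') ≤
      2 * B * Real.sqrt (T * Real.log (Fintype.card K)) := by
  set a := Real.log (Fintype.card K)
  set η := Real.sqrt (a / (B ^ 2 * T))
  have hround : ∀ t ∈ Icc 1 T, v t q - ∑ q', w t q' * v t q' ≤ B := fun t ht => by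
    linarith [(hv t ht q).2, ((hw.isDist (Finset.mem_Icc.1 ht).1).sum_mul_mem_Icc (hv t ht)).1]
  rcases le_or_gt (Fintype.card K) 1 with hK | hK
  · have : Subsingleton K := Fintype.card_le_one_iff_subsingleton.1 hK
    have hzero : ∀ t ∈ Icc 1 T, v t q - ∑ q', w t q' * v t q' = 0 := fun t ht => by
      have hsum := (hw.isDist (Finset.mem_Icc.1 ht).1).2
      rw [Fintype.sum_subsingleton _ q] at hsum
      rw [Fintype.sum_subsingleton _ q, hsum, one_mul, sub_self]
    rw [Finset.sum_eq_zero hzero]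
    positivity
  have ha : 0 < a := Real.log_pos (by exact_mod_cast hK)
  rcases le_or_gt a T with haT | hTa
  · have hT : (0 : ℝ) < T := ha.trans_le haT
    have hη : 0 < η := Real.sqrt_pos.2 (by positivity)
    have hη_sq : η ^ 2 = a / (B ^ 2 * T) := Real.sq_sqrt (by positivity)
    have hηB : η * B ≤ 1 := by
      refine (pow_le_one_iff_of_nonneg (by positivity) two_ne_zero).1 ?_
      rw [mul_pow, hη_sq, div_mul_eq_mul_div, mul_comm, mul_div_mul_left _ _ (by positivity)]
      exact (div_le_one hT).2 haT
    have hkey : η * (B * Real.sqrt (T * a)) = a := by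
      refine (sq_eq_sq₀ (by positivity) ha.le).1 ?_
      rw [mul_pow, mul_pow, hη_sq, Real.sq_sqrt (by positivity)]
      field_simp
    have hreg := hw.regret_le hη.le hηB hv q
    have h2a : (T : ℝ) * (η * B) ^ 2 = a := by rw [mul_pow, hη_sq]; field_simp
    refine le_of_mul_le_mul_left ?_ hη
    linarith
  · calc ∑ t ∈ Icc 1 T, (v t q - ∑ q', w t q' * v t q') ≤ T * B := by
          simpa using Finset.sum_le_card_nsmul _ _ _ hround
      _ ≤ Real.sqrt (T * a) * B := by
          gcongr
          exact Real.le_sqrt_of_sq_le (by nlinarith)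
      _ ≤ 2 * B * Real.sqrt (T * a) := by nlinarith [Real.sqrt_nonneg (T * a)]

end IsExpWeights

end ExponentialWeights

section Azuma

open ProbabilityTheory

theorem exp_mul_le_cosh_add_sinh_div_mul {c x : ℝ} (hc : 0 < c) (hx : |x| ≤ c) (l : ℝ) :
    Real.exp (l * x) ≤ Real.cosh (l * c) + Real.sinh (l * c) / c * x := by
  obtain ⟨hx₁, hx₂⟩ := abs_le.1 hx
  have ha : 0 ≤ (c - x) / (2 * c) := div_nonneg (by linarith) (by linarith)
  have hb : 0 ≤ (c + x) / (2 * c) := div_nonneg (by linarith) (by linarith)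
  have hconv := convexOn_exp.2 (Set.mem_univ (-(l * c))) (Set.mem_univ (l * c)) ha hb
    (by field_simp; ring)
  have hpoint : (c - x) / (2 * c) * -(l * c) + (c + x) / (2 * c) * (l * c) = l * x := by
    field_simp; ring
  simp only [smul_eq_mul, hpoint] at hconv
  refine hconv.trans_eq ?_
  rw [Real.cosh_eq, Real.sinh_eq]
  field_simp
  ring

variable {Ω : Type*} {m m0 : MeasurableSpace Ω} {μ : Measure Ω}

theorem condExp_exp_mul_le [IsFiniteMeasure μ] (hm : m ≤ m0) {X : Ω → ℝ}
    (hX : AEStronglyMeasurable X μ) {c : ℝ} (hc : 0 < c) (hb : ∀ ω, |X ω| ≤ c)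
    (h0 : μ[X|m] =ᵐ[μ] 0) (l : ℝ) :
    μ[fun ω => Real.exp (l * X ω)|m] ≤ᵐ[μ] fun _ => Real.exp (l ^ 2 * c ^ 2 / 2) := by
  have hXint : Integrable X μ :=
    Integrable.of_bound hX c (ae_of_all _ fun ω => (Real.norm_eq_abs _).trans_le (hb ω))
  have hchord := condExp_mono (m := m)
    (integrable_exp_mul_of_mem_Icc hX.aemeasurable (ae_of_all _ fun ω => abs_le.1 (hb ω)))
    ((integrable_const (Real.cosh (l * c))).add (hXint.smul (Real.sinh (l * c) / c)))
    (ae_of_all _ fun ω => exp_mul_le_cosh_add_sinh_div_mul hc (hb ω) l)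
  have hlin : μ[(fun _ => Real.cosh (l * c)) + (Real.sinh (l * c) / c) • X|m] =ᵐ[μ]
      fun _ => Real.cosh (l * c) := by
    filter_upwards [condExp_add (m := m) (integrable_const (Real.cosh (l * c)))
      (hXint.smul (Real.sinh (l * c) / c)), condExp_smul (m := m) (Real.sinh (l * c) / c) X, h0]
      with ω h1 h2 h3
    simp [h1, h2, h3, condExp_const hm]
  filter_upwards [hchord, hlin] with ω h1 h2
  calc _ ≤ Real.cosh (l * c) := h1.trans_eq h2
    _ ≤ Real.exp ((l * c) ^ 2 / 2) := Real.cosh_le_exp_half_sq _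
    _ = Real.exp (l ^ 2 * c ^ 2 / 2) := by ring_nf

theorem integral_mul_exp_mul_le [IsFiniteMeasure μ] (hm : m ≤ m0) {f : Ω → ℝ}
    (hf : StronglyMeasurable[m] f) {C : ℝ} (hfC : ∀ ω, ‖f ω‖ ≤ C) (hf0 : ∀ ω, 0 ≤ f ω)
    {X : Ω → ℝ} (hX : AEStronglyMeasurable X μ) {c : ℝ} (hc : 0 < c) (hb : ∀ ω, |X ω| ≤ c)
    (h0 : μ[X|m] =ᵐ[μ] 0) (l : ℝ) :
    ∫ ω, f ω * Real.exp (l * X ω) ∂μ ≤ (∫ ω, f ω ∂μ) * Real.exp (l ^ 2 * c ^ 2 / 2) := by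
  set g : Ω → ℝ := fun ω => Real.exp (l * X ω)
  have hf_int : Integrable f μ :=
    Integrable.of_bound (hf.mono hm).aestronglyMeasurable C (ae_of_all _ hfC)
  have hg_int : Integrable g μ :=
    integrable_exp_mul_of_mem_Icc hX.aemeasurable (ae_of_all _ fun ω => abs_le.1 (hb ω))
  have hpull : μ[f * g|m] =ᵐ[μ] f * μ[g|m] :=
    condExp_stronglyMeasurable_mul_of_bound hm hf hg_int C (ae_of_all _ hfC)
  calc ∫ ω, f ω * g ω ∂μ = ∫ ω, (f * μ[g|m]) ω ∂μ := by
        rw [← integral_congr_ae hpull, integral_condExp hm]; rfl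
    _ ≤ ∫ ω, f ω * Real.exp (l ^ 2 * c ^ 2 / 2) ∂μ := by
        refine integral_mono_ae (integrable_condExp.congr hpull) (hf_int.mul_const _) ?_
        filter_upwards [condExp_exp_mul_le hm hX hc hb h0 l] with ω hω
        exact mul_le_mul_of_nonneg_left hω (hf0 ω)
    _ = (∫ ω, f ω ∂μ) * Real.exp (l ^ 2 * c ^ 2 / 2) := integral_mul_const _ _

theorem abs_sum_le_card_mul {ι : Type*} (s : Finset ι) {f : ι → ℝ} {c : ℝ}
    (h : ∀ i ∈ s, |f i| ≤ c) : |∑ i ∈ s, f i| ≤ s.card * c :=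
  (Finset.abs_sum_le_sum_abs f s).trans (by simpa using Finset.sum_le_card_nsmul s _ c h)

variable {F : Filtration ℕ m0} {D : ℕ → Ω → ℝ} {c : ℝ}

theorem mgf_sum_Icc_le [IsProbabilityMeasure μ] (hc : 0 < c) {T : ℕ}
    (hmeas : ∀ t ∈ Icc 1 T, Measurable[F t] (D t)) (hb : ∀ t ∈ Icc 1 T, ∀ ω, |D t ω| ≤ c)
    (h0 : ∀ t ∈ Icc 1 T, μ[D t|F (t - 1)] =ᵐ[μ] 0) (l : ℝ) :
    mgf (fun ω => ∑ t ∈ Icc 1 T, D t ω) μ l ≤ Real.exp (l ^ 2 * c ^ 2 * T / 2) := by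
  induction T with
  | zero => simp [mgf]
  | succ T ih =>
    have hsub : Icc 1 T ⊆ Icc 1 (T + 1) := Finset.Icc_subset_Icc_right (Nat.le_succ T)
    have hlast : T + 1 ∈ Icc 1 (T + 1) := Finset.mem_Icc.2 ⟨Nat.le_add_left 1 T, le_rfl⟩
    have hS_meas : Measurable[F T] fun ω => ∑ t ∈ Icc 1 T, D t ω :=
      Finset.measurable_sum _ fun t ht =>
        (hmeas t (hsub ht)).mono (F.mono (Finset.mem_Icc.1 ht).2) le_rfl
    have hS_bound : ∀ ω, ‖Real.exp (l * ∑ t ∈ Icc 1 T, D t ω)‖ ≤ Real.exp (|l| * (T * c)) :=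
      fun ω => by
        have hS := abs_sum_le_card_mul (Icc 1 T) fun t ht => hb t (hsub ht) ω
        rw [Nat.card_Icc, Nat.add_sub_cancel] at hS
        rw [Real.norm_eq_abs, Real.abs_exp, Real.exp_le_exp]
        exact (le_abs_self _).trans (abs_mul l _ ▸ mul_le_mul_of_nonneg_left hS (abs_nonneg l))
    calc mgf (fun ω => ∑ t ∈ Icc 1 (T + 1), D t ω) μ l
        = ∫ ω, Real.exp (l * ∑ t ∈ Icc 1 T, D t ω) * Real.exp (l * D (T + 1) ω) ∂μ := by
          simp only [mgf, Finset.sum_Icc_succ_top (Nat.le_add_left 1 T), mul_add, Real.exp_add]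
      _ ≤ mgf (fun ω => ∑ t ∈ Icc 1 T, D t ω) μ l * Real.exp (l ^ 2 * c ^ 2 / 2) :=
          integral_mul_exp_mul_le (F.le T) (hS_meas.const_mul l).exp.stronglyMeasurable hS_bound
            (fun ω => (Real.exp_pos _).le)
            ((hmeas _ hlast).mono (F.le _) le_rfl).aestronglyMeasurable hc (hb _ hlast)
            (by simpa using h0 _ hlast) l
      _ ≤ Real.exp (l ^ 2 * c ^ 2 * T / 2) * Real.exp (l ^ 2 * c ^ 2 / 2) :=
          mul_le_mul_of_nonneg_right (ih (fun t ht => hmeas t (hsub ht))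
            (fun t ht => hb t (hsub ht)) (fun t ht => h0 t (hsub ht))) (Real.exp_pos _).le
      _ = Real.exp (l ^ 2 * c ^ 2 * (T + 1 : ℕ) / 2) := by
          rw [← Real.exp_add]; push_cast; ring_nf

theorem measureReal_sum_Icc_ge_le [IsProbabilityMeasure μ] (hc : 0 < c) {T : ℕ}
    (hmeas : ∀ t ∈ Icc 1 T, Measurable[F t] (D t)) (hb : ∀ t ∈ Icc 1 T, ∀ ω, |D t ω| ≤ c)
    (h0 : ∀ t ∈ Icc 1 T, μ[D t|F (t - 1)] =ᵐ[μ] 0) {ε : ℝ} (hε : 0 ≤ ε) :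
    μ.real {ω | ε ≤ ∑ t ∈ Icc 1 T, D t ω} ≤ Real.exp (-ε ^ 2 / (2 * T * c ^ 2)) := by
  set l := ε / (T * c ^ 2)
  have hS_meas : AEMeasurable (fun ω => ∑ t ∈ Icc 1 T, D t ω) μ :=
    (Finset.measurable_sum _ fun t ht => (hmeas t ht).mono (F.le t) le_rfl).aemeasurable
  have hS_bound : ∀ ω, |∑ t ∈ Icc 1 T, D t ω| ≤ T * c := fun ω => by
    simpa using abs_sum_le_card_mul (Icc 1 T) fun t ht => hb t ht ω
  calc μ.real {ω | ε ≤ ∑ t ∈ Icc 1 T, D t ω}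
      ≤ Real.exp (-l * ε) * mgf (fun ω => ∑ t ∈ Icc 1 T, D t ω) μ l :=
        measure_ge_le_exp_mul_mgf ε (by positivity)
          (integrable_exp_mul_of_mem_Icc hS_meas (ae_of_all _ fun ω => abs_le.1 (hS_bound ω)))
    _ ≤ Real.exp (-l * ε) * Real.exp (l ^ 2 * c ^ 2 * T / 2) :=
        mul_le_mul_of_nonneg_left (mgf_sum_Icc_le hc hmeas hb h0 l) (Real.exp_pos _).le
    _ = Real.exp (-ε ^ 2 / (2 * T * c ^ 2)) := by
        rw [← Real.exp_add]
        congr 1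
        rcases Nat.eq_zero_or_pos T with hT | hT
        · simp [l, hT]
        · simp only [l]; field_simp; ring

end Azuma

section ProductDistribution

variable {ι : Type*} {A : ι → Type*}

noncomputable def prodExpect [Fintype ι] [DecidableEq ι] [∀ i, Fintype (A i)]
    (w : ∀ i, A i → ℝ) (f : (∀ i, A i) → ℝ) : ℝ :=
  ∑ a, (∏ i, w i (a i)) * f a

theorem prodExpect_mem_Icc [Fintype ι] [DecidableEq ι] [∀ i, Fintype (A i)]
    {w : ∀ i, A i → ℝ} (hw : ∀ i, IsDist (w i)) {f : (∀ i, A i) → ℝ} {lo hi : ℝ}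
    (hf : ∀ a, f a ∈ Set.Icc lo hi) : prodExpect w f ∈ Set.Icc lo hi :=
  (IsDist.pi hw).sum_mul_mem_Icc hf

theorem prod_apply_update_mul [Fintype ι] [DecidableEq ι] (w : ∀ i, A i → ℝ) (a : ∀ i, A i)
    (i : ι) (b : A i) :
    (∏ j, w j (Function.update a i b j)) * w i (a i) = (∏ j, w j (a j)) * w i b := by
  rw [Fintype.prod_eq_mul_prod_compl i, Fintype.prod_eq_mul_prod_compl i fun j => w j (a j),
    Function.update_self, Finset.prod_congr rfl fun j hj =>
      by rw [Function.update_of_ne (Finset.mem_compl.1 hj ∘ Finset.mem_singleton.2)]]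
  ring

theorem prodExpect_sum_mul_update [Fintype ι] [DecidableEq ι] [∀ i, Fintype (A i)]
    (w : ∀ i, A i → ℝ) (i : ι) (hw : ∑ b, w i b = 1) (f : (∀ i, A i) → ℝ) :
    prodExpect w (fun a => ∑ b, w i b * f (Function.update a i b)) = prodExpect w f := by
  let φ : (∀ j, A j) × A i → (∀ j, A j) × A i := fun x => (Function.update x.1 i x.2, x.1 i)
  have hφ : Function.Involutive φ := fun x => by simp [φ]
  let F : (∀ j, A j) × A i → ℝ := fun x => (∏ j, w j (x.1 j)) * w i x.2 * f x.1
  calc prodExpect w (fun a => ∑ b, w i b * f (Function.update a i b))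
      = ∑ x, F (φ x) := by
        simp only [prodExpect, Finset.mul_sum, Fintype.sum_prod_type]
        refine Finset.sum_congr rfl fun a _ => Finset.sum_congr rfl fun b _ => ?_
        simp only [F, φ, prod_apply_update_mul]
        ring
    _ = ∑ x, F x := Equiv.sum_comp hφ.toPerm F
    _ = prodExpect w f := by
        simp only [prodExpect, F, Fintype.sum_prod_type, mul_right_comm _ (w i _) (f _),
          ← Finset.mul_sum, hw, mul_one]

noncomputable def deviationGain [DecidableEq ι] [∀ i, Fintype (A i)] (f : (∀ i, A i) → ℝ)
    (i : ι) (w : A i → ℝ) (b : A i) (a : ∀ i, A i) : ℝ :=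
  f (Function.update a i b) - ∑ b', w b' * f (Function.update a i b')

noncomputable def deviationRegret [Fintype ι] [DecidableEq ι] [∀ i, Fintype (A i)]
    (f : (∀ i, A i) → ℝ) (w : ∀ i, A i → ℝ) (i : ι) (b : A i) : ℝ :=
  prodExpect w (fun a => f (Function.update a i b)) - prodExpect w f

theorem deviationRegret_eq_prodExpect_deviationGain [Fintype ι] [DecidableEq ι]
    [∀ i, Fintype (A i)] {w : ∀ i, A i → ℝ} {i : ι} (hw : ∑ b, w i b = 1) (f : (∀ i, A i) → ℝ)
    (b : A i) : deviationRegret f w i b = prodExpect w (deviationGain f i (w i) b) := by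
  rw [deviationRegret, ← prodExpect_sum_mul_update w i hw f, prodExpect, prodExpect, prodExpect,
    ← Finset.sum_sub_distrib]
  simp only [deviationGain, mul_sub]

theorem deviationGain_mem_Icc [DecidableEq ι] [∀ i, Fintype (A i)] {f : (∀ i, A i) → ℝ}
    {B : ℝ} (hf : ∀ a, f a ∈ Set.Icc 0 B) {i : ι} {w : A i → ℝ} (hw : IsDist w) (b : A i)
    (a : ∀ i, A i) :
    deviationGain f i w b a ∈ Set.Icc (-B) B := by
  have hmean := hw.sum_mul_mem_Icc fun b' => hf (Function.update a i b')
  have hb := hf (Function.update a i b)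
  constructor <;> simp only [deviationGain] <;> linarith [hmean.1, hmean.2, hb.1, hb.2]

theorem deviationGain_le_of_le [DecidableEq ι] [∀ i, Fintype (A i)] {f : (∀ i, A i) → ℝ}
    {i : ι} {w : A i → ℝ} (hw : IsDist w) {V : A i → ℝ} {ε : ℝ} {b : A i} {a : ∀ i, A i}
    (hlo : f (Function.update a i b) ≤ V b) (hhi : ∀ q, V q ≤ f (Function.update a i q) + ε) :
    deviationGain f i w b a ≤ V b - ∑ q, w q * V q + ε := by
  have hmean : ∑ q, w q * V q ≤ ∑ q, w q * f (Function.update a i q) + ε :=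
    calc ∑ q, w q * V q ≤ ∑ q, w q * (f (Function.update a i q) + ε) := by
          gcongr with q; exacts [hw.1 q, hhi q]
      _ = ∑ q, w q * f (Function.update a i q) + ε := by
          simp only [mul_add, Finset.sum_add_distrib, ← Finset.sum_mul, hw.2, one_mul]
  rw [deviationGain]
  linarith

end ProductDistribution

section Sampling

variable {Ω X : Type*} [Fintype X] {m m0 : MeasurableSpace Ω} {μ : Measure Ω} {p : Ω → X}
  {g : Ω → X → ℝ}

theorem eval_eq_sum_indicator_mul (ω : Ω) :
    g ω (p ω) = ∑ x, {ω' | p ω' = x}.indicator (fun _ => (1 : ℝ)) ω * g ω x := by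
  classical
  simp [Set.indicator_apply]

theorem measurable_eval_of_measurableSet_fiber (hp : ∀ x, MeasurableSet[m] {ω | p ω = x})
    (hg : ∀ x, Measurable[m] (g · x)) : Measurable[m] fun ω => g ω (p ω) := by
  simp_rw [eval_eq_sum_indicator_mul (p := p) (g := g)]
  exact Finset.measurable_sum _ fun x _ => (measurable_const.indicator (hp x)).mul (hg x)

theorem condExp_eval_of_condExp_indicator [IsFiniteMeasure μ] (hm : m ≤ m0)
    (hp : ∀ x, MeasurableSet[m0] {ω | p ω = x}) {L : X → Ω → ℝ}
    (hL : ∀ x, μ[{ω | p ω = x}.indicator (fun _ => (1 : ℝ))|m] =ᵐ[μ] L x)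
    (hg : ∀ x, Measurable[m] (g · x)) {C : ℝ} (hC : ∀ ω x, |g ω x| ≤ C) :
    μ[fun ω => g ω (p ω)|m] =ᵐ[μ] fun ω => ∑ x, L x ω * g ω x := by
  have hsplit : (fun ω => g ω (p ω)) =
      ∑ x, (g · x) * {ω | p ω = x}.indicator (fun _ => (1 : ℝ)) := by
    ext ω
    simp only [eval_eq_sum_indicator_mul (p := p) (g := g) ω, Finset.sum_apply, Pi.mul_apply,
      mul_comm]
  have hind : ∀ x, Integrable ({ω | p ω = x}.indicator (fun _ => (1 : ℝ))) μ :=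
    fun x => (integrable_const 1).indicator (hp x)
  have hterm : ∀ x, μ[(g · x) * {ω | p ω = x}.indicator (fun _ => (1 : ℝ))|m] =ᵐ[μ]
      (g · x) * L x := fun x =>
    (condExp_stronglyMeasurable_mul_of_bound hm (hg x).stronglyMeasurable (hind x) C
      (ae_of_all _ fun ω => hC ω x)).trans ((hL x).mul_left)
  rw [hsplit]
  refine (condExp_finsetSum (fun x _ => (hind x).bdd_mul
    ((hg x).mono hm le_rfl).aestronglyMeasurable (ae_of_all _ fun ω => hC ω x)) m).trans ?_
  refine (eventuallyEq_sum fun x _ => hterm x).trans (Filter.EventuallyEq.of_eq ?_)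
  ext ω
  simp only [Finset.sum_apply, Pi.mul_apply, mul_comm]

theorem condExp_sum_mul_sub_eval_eq_zero [IsFiniteMeasure μ] (hm : m ≤ m0)
    (hp : ∀ x, MeasurableSet[m0] {ω | p ω = x}) {L : X → Ω → ℝ}
    (hL : ∀ x, μ[{ω | p ω = x}.indicator (fun _ => (1 : ℝ))|m] =ᵐ[μ] L x)
    (hL_meas : ∀ x, Measurable[m] (L x)) (hg : ∀ x, Measurable[m] (g · x)) {C : ℝ}
    (hC : ∀ ω x, |g ω x| ≤ C) :
    μ[fun ω => ∑ x, L x ω * g ω x - g ω (p ω)|m] =ᵐ[μ] 0 := by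
  have hcond := condExp_eval_of_condExp_indicator hm hp hL hg hC
  have hmean_meas : StronglyMeasurable[m] fun ω => ∑ x, L x ω * g ω x :=
    (Finset.measurable_sum _ fun x _ => (hL_meas x).mul (hg x)).stronglyMeasurable
  have hmean_int : Integrable (fun ω => ∑ x, L x ω * g ω x) μ :=
    integrable_condExp.congr hcond
  have heval_int : Integrable (fun ω => g ω (p ω)) μ :=
    Integrable.of_bound (measurable_eval_of_measurableSet_fiber hp fun x =>
      (hg x).mono hm le_rfl).aestronglyMeasurable C (ae_of_all _ fun ω => hC ω (p ω))
  have hsub : μ[fun ω => ∑ x, L x ω * g ω x - g ω (p ω)|m] =ᵐ[μ]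
      μ[fun ω => ∑ x, L x ω * g ω x|m] - μ[fun ω => g ω (p ω)|m] :=
    condExp_sub hmean_int heval_int m
  filter_upwards [hsub, hcond] with ω h1 h2
  rw [h1, Pi.sub_apply, condExp_of_stronglyMeasurable hm hmean_meas hmean_int, h2, sub_self,
    Pi.zero_apply]

end Sampling

theorem ofReal_one_sub_le_measure {Ω : Type*} {m0 : MeasurableSpace Ω} {μ : Measure Ω}
    [IsProbabilityMeasure μ] {κ : Type*} [Fintype κ] {s : Set Ω} {bad : κ → Set Ω} {δ : ℝ}
    (hδ : 0 ≤ δ) (hbad : ∑ k, μ.real (bad k) ≤ δ) (hs : ∀ᵐ ω ∂μ, (∀ k, ω ∉ bad k) → ω ∈ s) :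
    ENNReal.ofReal (1 - δ) ≤ μ s := by
  have hcompl : μ sᶜ ≤ ENNReal.ofReal δ :=
    calc μ sᶜ ≤ μ (⋃ k, bad k) := measure_mono_ae <| hs.mono fun ω h hω =>
          Set.mem_iUnion.2 (not_forall_not.1 (mt h hω))
      _ ≤ ∑ k, μ (bad k) := measure_iUnion_fintype_le μ bad
      _ = ENNReal.ofReal (∑ k, μ.real (bad k)) := by
          rw [ENNReal.ofReal_sum_of_nonneg fun k _ => measureReal_nonneg]
          exact Finset.sum_congr rfl fun k _ => (ofReal_measureReal (measure_ne_top μ _)).symm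
      _ ≤ ENNReal.ofReal δ := ENNReal.ofReal_le_ofReal hbad
  have hcover : 1 ≤ μ s + μ sᶜ := by
    simpa [measure_univ] using measure_union_le (μ := μ) s sᶜ
  calc ENNReal.ofReal (1 - δ) = 1 - ENNReal.ofReal δ := by
        rw [ENNReal.ofReal_sub _ hδ, ENNReal.ofReal_one]
    _ ≤ μ s := by
        rw [tsub_le_iff_right]
        exact hcover.trans (add_le_add le_rfl hcompl)

theorem measurable_expWeights {K : Type*} [Fintype K] {Ω : Type*} {m0 : MeasurableSpace Ω}
    {F : Filtration ℕ m0} {η : ℝ} {v w : ℕ → K → Ω → ℝ} (hv : ∀ t q, Measurable[F t] (v t q))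
    (hw : ∀ ω, IsExpWeights η (fun t q => v t q ω) (fun t q => w t q ω)) {t : ℕ} (ht : 1 ≤ t)
    (q : K) : Measurable[F (t - 1)] (w t q) := by
  induction t, ht using Nat.le_induction generalizing q with
  | base =>
    rw [show w 1 q = fun _ => 1 / (Fintype.card K : ℝ) from funext fun ω => (hw ω).1 q]
    exact measurable_const
  | succ t ht ih =>
    have hw_t : ∀ q, Measurable[F t] (w t q) := fun q =>
      (ih q).mono (F.mono (Nat.sub_le t 1)) le_rfl
    rw [show w (t + 1) q = fun ω => w t q ω * Real.exp (η * v t q ω) /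
        ∑ q', w t q' ω * Real.exp (η * v t q' ω) from funext fun ω => (hw ω).2 t ht q]
    exact ((hw_t q).mul ((hv t q).const_mul η).exp).div
      (Finset.measurable_sum _ fun q' _ => (hw_t q').mul ((hv t q').const_mul η).exp)

section Game

variable {ι : Type*} [Fintype ι] [DecidableEq ι] {Pc : ι → Type*} [∀ i, Fintype (Pc i)]
  {Ω : Type*} {m0 : MeasurableSpace Ω} {μ : Measure Ω} {F : Filtration ℕ m0}
  {u : (∀ i, Pc i) → ℝ} {B : ℝ} {T : ℕ} {πt : ℕ → ∀ i, Ω → Pc i} {Lam : ℕ → ∀ i, Pc i → Ω → ℝ}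

/-- The martingale difference sequence of the regret decomposition. -/
noncomputable def gainNoise (u : (∀ i, Pc i) → ℝ) (Lam : ℕ → ∀ i, Pc i → Ω → ℝ)
    (πt : ℕ → ∀ i, Ω → Pc i) (i : ι) (b : Pc i) (t : ℕ) (ω : Ω) : ℝ :=
  prodExpect (fun j q => Lam t j q ω) (deviationGain u i (Lam t i · ω) b) -
    deviationGain u i (Lam t i · ω) b (fun j => πt t j ω)

theorem measureReal_sum_gainNoise_ge_le [IsProbabilityMeasure μ] (hB : 0 < B) (hT : (0 : ℝ) < T)
    (hu : ∀ a, u a ∈ Set.Icc 0 B) (hπ : ∀ t i q, MeasurableSet[F t] {ω | πt t i ω = q})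
    (hLam : ∀ t ∈ Icc 1 T, ∀ i ω, IsDist (Lam t i · ω))
    (hLam_meas : ∀ t ∈ Icc 1 T, ∀ i q, Measurable[F (t - 1)] (Lam t i q))
    (hsamp : ∀ t ∈ Icc 1 T, ∀ a : ∀ i, Pc i,
      μ[{ω | ∀ i, πt t i ω = a i}.indicator (fun _ => (1 : ℝ))|F (t - 1)] =ᵐ[μ]
        fun ω => ∏ i, Lam t i (a i) ω)
    (i : ι) (b : Pc i) {L : ℝ} (hL : 0 ≤ L) :
    μ.real {ω | 2 * B * Real.sqrt (2 * (T * L)) ≤ ∑ t ∈ Icc 1 T, gainNoise u Lam πt i b t ω} ≤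
      Real.exp (-L) := by
  have hfiber : ∀ t a, MeasurableSet[F t] {ω | (fun j => πt t j ω) = a} := fun t a => by
    simp only [funext_iff, Set.ofPred_forall]
    exact MeasurableSet.iInter fun j => hπ t j (a j)
  have hgain_meas : ∀ t ∈ Icc 1 T, ∀ a,
      Measurable[F (t - 1)] fun ω => deviationGain u i (Lam t i · ω) b a := fun t ht a =>
    measurable_const.sub (Finset.measurable_sum _ fun q _ => (hLam_meas t ht i q).mul_const _)
  have hgain_mem : ∀ t ∈ Icc 1 T, ∀ ω a, deviationGain u i (Lam t i · ω) b a ∈ Set.Icc (-B) B :=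
    fun t ht ω a => deviationGain_mem_Icc hu (hLam t ht i ω) b a
  have hprob_meas : ∀ t ∈ Icc 1 T, ∀ a : ∀ i, Pc i,
      Measurable[F (t - 1)] fun ω => ∏ j, Lam t j (a j) ω := fun t ht a =>
    Finset.measurable_prod _ fun j _ => hLam_meas t ht j (a j)
  refine (measureReal_sum_Icc_ge_le (F := F) (by positivity : (0 : ℝ) < 2 * B)
    (fun t ht => ?_) (fun t ht ω => ?_) (fun t ht => ?_) (by positivity)).trans_eq ?_
  · have hmono : F (t - 1) ≤ F t := F.mono (Nat.sub_le t 1)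
    exact (Finset.measurable_sum _ fun a _ => ((hprob_meas t ht a).mul
      (hgain_meas t ht a)).mono hmono le_rfl).sub
      (measurable_eval_of_measurableSet_fiber (hfiber t) fun a =>
        (hgain_meas t ht a).mono hmono le_rfl)
  · have h1 := prodExpect_mem_Icc (fun j => hLam t ht j ω) (hgain_mem t ht ω)
    have h2 := hgain_mem t ht ω (fun j => πt t j ω)
    rw [gainNoise, abs_le]
    constructor <;> linarith [h1.1, h1.2, h2.1, h2.2]
  · exact condExp_sum_mul_sub_eval_eq_zero (p := fun ω j => πt t j ω)
      (L := fun a ω => ∏ j, Lam t j (a j) ω)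
      (g := fun ω a => deviationGain u i (Lam t i · ω) b a) (F.le _)
      (fun a => F.le t _ (hfiber t a)) (fun a => by simpa only [funext_iff] using hsamp t ht a)
      (hprob_meas t ht) (hgain_meas t ht) (C := B) fun ω a => abs_le.2 (hgain_mem t ht ω a)
  · rw [mul_pow, mul_pow, Real.sq_sqrt (by positivity)]
    congr 1
    field_simp

theorem sum_deviationRegret_le_mul {ω : Ω} (hu : ∀ a, u a ∈ Set.Icc 0 B)
    (hLam : ∀ t ∈ Icc 1 T, ∀ j, IsDist (Lam t j · ω)) (i : ι) (b : Pc i) :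
    ∑ t ∈ Icc 1 T, deviationRegret u (fun j q => Lam t j q ω) i b ≤ T * B := by
  have hround : ∀ t ∈ Icc 1 T, deviationRegret u (fun j q => Lam t j q ω) i b ≤ B :=
    fun t ht => by
      have h1 := prodExpect_mem_Icc (hLam t ht) fun a => hu (Function.update a i b)
      have h2 := prodExpect_mem_Icc (hLam t ht) hu
      rw [deviationRegret]
      linarith [h1.2, h2.1]
  simpa using Finset.sum_le_card_nsmul _ _ _ hround

theorem sum_deviationRegret_le_sum_gainNoise_add {Vbar : ℕ → ∀ i, Pc i → Ω → ℝ} {ε : ℝ} {ω : Ω} {i : ι}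
    {b : Pc i} (hLam : ∀ t ∈ Icc 1 T, ∀ j, IsDist (Lam t j · ω))
    (hlo : ∀ t ∈ Icc 1 T, u (Function.update (fun j => πt t j ω) i b) ≤ Vbar t i b ω)
    (hhi : ∀ t ∈ Icc 1 T, ∀ q, Vbar t i q ω ≤ u (Function.update (fun j => πt t j ω) i q) + ε) :
    ∑ t ∈ Icc 1 T, deviationRegret u (fun j q => Lam t j q ω) i b ≤
    ∑ t ∈ Icc 1 T, gainNoise u Lam πt i b t ω +
      ∑ t ∈ Icc 1 T, (Vbar t i b ω - ∑ q, Lam t i q ω * Vbar t i q ω) + ε * T := by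
  have hround : ∀ t ∈ Icc 1 T,
      deviationRegret u (fun j q => Lam t j q ω) i b ≤
      gainNoise u Lam πt i b t ω + (Vbar t i b ω - ∑ q, Lam t i q ω * Vbar t i q ω) + ε :=
    fun t ht => by
      rw [deviationRegret_eq_prodExpect_deviationGain (hLam t ht i).2, gainNoise]
      linarith [deviationGain_le_of_le (hLam t ht i) (hlo t ht) (hhi t ht)]
  refine (Finset.sum_le_sum hround).trans_eq ?_
  rw [Finset.sum_add_distrib, Finset.sum_add_distrib, Finset.sum_const, Nat.card_Icc,
    Nat.add_sub_cancel, nsmul_eq_mul, mul_comm]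

theorem sum_deviationRegret_le_of_sum_gainNoise_le [∀ i, Nonempty (Pc i)] (hB : 0 < B)
    {Vbar : ℕ → ∀ i, Pc i → Ω → ℝ} {ε : ℝ} {ω : Ω}
    (hLam : ∀ j, IsExpWeights (Real.sqrt (Real.log (Fintype.card (Pc j)) / (B ^ 2 * T)))
      (fun t q => Vbar t j q ω) (fun t q => Lam t j q ω))
    {i : ι} (hest : ∀ t ∈ Icc 1 T, ∀ q : Pc i,
      u (Function.update (fun j => πt t j ω) i q) ≤ Vbar t i q ω ∧
      Vbar t i q ω ≤ u (Function.update (fun j => πt t j ω) i q) + ε ∧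
      0 ≤ Vbar t i q ω ∧ Vbar t i q ω ≤ B)
    {L : ℝ} (hL : Real.log (Fintype.card (Pc i)) ≤ L) (b : Pc i)
    (hnoise : ∑ t ∈ Icc 1 T, gainNoise u Lam πt i b t ω ≤ 2 * B * Real.sqrt (2 * (T * L))) :
    ∑ t ∈ Icc 1 T, deviationRegret u (fun j q => Lam t j q ω) i b ≤
      ε * T + 5 * B * Real.sqrt (T * L) := by
  have hdecomp := sum_deviationRegret_le_sum_gainNoise_add (Vbar := Vbar) (ε := ε)
    (fun t ht j => (hLam j).isDist (Finset.mem_Icc.1 ht).1) (fun t ht => (hest t ht b).1)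
    (fun t ht q => (hest t ht q).2.1)
  have hhedge := (hLam i).regret_le_two_mul_sqrt hB (fun t ht q => (hest t ht q).2.2) b
  have hsqrt_log : Real.sqrt (T * Real.log (Fintype.card (Pc i))) ≤ Real.sqrt (T * L) :=
    Real.sqrt_le_sqrt (mul_le_mul_of_nonneg_left hL (Nat.cast_nonneg T))
  have hsqrt_two : Real.sqrt (2 * (T * L)) ≤ 3 / 2 * Real.sqrt (T * L) := by
    rw [Real.sqrt_mul zero_le_two]
    gcongr
    rw [Real.sqrt_le_left (by norm_num)]
    norm_num
  nlinarith

end Game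

theorem one_sub_le_measure_sum_deviationRegret_le {ι : Type*} [Fintype ι] [DecidableEq ι] {Pc : ι → Type*}
    [∀ i, Fintype (Pc i)] [∀ i, Nonempty (Pc i)] {Ω : Type*} {m0 : MeasurableSpace Ω}
    {μ : Measure Ω} [IsProbabilityMeasure μ] {F : Filtration ℕ m0} {u : ι → (∀ i, Pc i) → ℝ}
    {B : ℝ} (hu : ∀ i a, u i a ∈ Set.Icc 0 B) {T : ℕ} {ε δ : ℝ} (hε : 0 ≤ ε) (hδ0 : 0 < δ)
    (hδ1 : δ < 1) {πt : ℕ → ∀ i, Ω → Pc i} (hπ : ∀ t i q, MeasurableSet[F t] {ω | πt t i ω = q})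
    {Vbar : ℕ → ∀ i, Pc i → Ω → ℝ} (hVbar : ∀ t i q, Measurable[F t] (Vbar t i q))
    {Lam : ℕ → ∀ i, Pc i → Ω → ℝ}
    (hLam : ∀ i ω, IsExpWeights (Real.sqrt (Real.log (Fintype.card (Pc i)) / (B ^ 2 * T)))
      (fun t q => Vbar t i q ω) (fun t q => Lam t i q ω))
    (hsamp : ∀ t ∈ Icc 1 T, ∀ a : ∀ i, Pc i,
      μ[{ω | ∀ i, πt t i ω = a i}.indicator (fun _ => (1 : ℝ))|F (t - 1)] =ᵐ[μ]
        fun ω => ∏ i, Lam t i (a i) ω)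
    (hest : ∀ t ∈ Icc 1 T, ∀ i (q : Pc i), ∀ᵐ ω ∂μ,
      u i (Function.update (fun j => πt t j ω) i q) ≤ Vbar t i q ω ∧
      Vbar t i q ω ≤ u i (Function.update (fun j => πt t j ω) i q) + ε ∧
      0 ≤ Vbar t i q ω ∧ Vbar t i q ω ≤ B) :
    ENNReal.ofReal (1 - δ) ≤ μ {ω | ∀ i (q : Pc i),
      ∑ t ∈ Icc 1 T, deviationRegret (u i) (fun j q' => Lam t j q' ω) i q ≤
      ε * T + 5 * B * Real.sqrt (T * Real.log ((∑ j, (Fintype.card (Pc j) : ℝ)) / δ))} := by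
  have hLam_dist : ∀ t ∈ Icc 1 T, ∀ j ω, IsDist (Lam t j · ω) := fun t ht j ω =>
    (hLam j ω).isDist (Finset.mem_Icc.1 ht).1
  set Sc := ∑ j, (Fintype.card (Pc j) : ℝ)
  set L := Real.log (Sc / δ)
  have hcard_le : ∀ i, (Fintype.card (Pc i) : ℝ) ≤ Sc := fun i =>
    Finset.single_le_sum (f := fun j => (Fintype.card (Pc j) : ℝ)) (fun j _ => Nat.cast_nonneg _)
      (Finset.mem_univ i)
  by_cases hTB : (T : ℝ) * B ≤ 0
  · have huniv : ∀ ω i (q : Pc i),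
        ∑ t ∈ Icc 1 T, deviationRegret (u i) (fun j q' => Lam t j q' ω) i q ≤
        ε * T + 5 * B * Real.sqrt (T * L) := fun ω i q => by
      have hregret := sum_deviationRegret_le_mul (hu i) (fun t ht j => hLam_dist t ht j ω) i q
      have hB := hu i fun _ => Classical.arbitrary _
      nlinarith [Real.sqrt_nonneg (T * L), hB.1.trans hB.2]
    calc ENNReal.ofReal (1 - δ) ≤ μ Set.univ := by
          rw [measure_univ]; exact ENNReal.ofReal_le_one.2 (by linarith)
      _ ≤ _ := measure_mono fun ω _ => huniv ω
  rw [not_le] at hTB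
  have hB : 0 < B := pos_of_mul_pos_right hTB (Nat.cast_nonneg T)
  have hT : (0 : ℝ) < T := pos_of_mul_pos_left hTB hB.le
  let bad : (Σ i, Pc i) → Set Ω := fun k =>
    {ω | 2 * B * Real.sqrt (2 * (T * L)) ≤ ∑ t ∈ Icc 1 T, gainNoise (u k.1) Lam πt k.1 k.2 t ω}
  have hbad : ∀ k, μ.real (bad k) ≤ δ / Sc := fun ⟨i, q⟩ => by
    have hSc : 0 < Sc := (Nat.cast_pos.2 Fintype.card_pos).trans_le (hcard_le i)
    have hL : 0 ≤ L := Real.log_nonneg <| (one_le_div hδ0).2 <|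
      hδ1.le.trans ((Nat.one_le_cast.2 Fintype.card_pos).trans (hcard_le i))
    refine (measureReal_sum_gainNoise_ge_le hB hT (hu i) hπ hLam_dist
      (fun t ht j => measurable_expWeights (hVbar · j) (hLam j) (Finset.mem_Icc.1 ht).1) hsamp i q
      hL).trans_eq ?_
    rw [Real.exp_neg, Real.exp_log (by positivity), inv_div]
  refine ofReal_one_sub_le_measure hδ0.le (bad := bad) ?_ ?_
  · calc ∑ k, μ.real (bad k) ≤ ∑ _k : (Σ i, Pc i), δ / Sc := Finset.sum_le_sum fun k _ => hbad k
      _ ≤ δ := by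
        rw [Finset.sum_const, Finset.card_univ, Fintype.card_sigma, nsmul_eq_mul, Nat.cast_sum]
        change Sc * (δ / Sc) ≤ δ
        rcases eq_or_ne Sc 0 with hSc | hSc
        · simp [hSc, hδ0.le]
        · rw [mul_div_cancel₀ δ hSc]
  · filter_upwards [(Filter.eventually_all_finset _).2 fun t ht =>
      Filter.eventually_all.2 fun i => Filter.eventually_all.2 (hest t ht i)] with ω hω hgood i q
    have hL : Real.log (Fintype.card (Pc i)) ≤ L :=
      Real.log_le_log (Nat.cast_pos.2 Fintype.card_pos)
        ((hcard_le i).trans (le_div_self (by positivity) hδ0 hδ1.le))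
    exact sum_deviationRegret_le_of_sum_gainNoise_le hB (fun j => hLam j ω) (fun t ht q => hω t ht i q) hL q
      (not_le.1 (hgood ⟨i, q⟩)).le

/-- regret guarantee for Decentralized Optimistic Policy Mirror
Descent given optimistic value estimates.  There is a universal constant `C` such
that, for any finite Markov game, finite Markov policy classes `Pc i` of the players,
learning rates `η_i = √(log |Π_i| / (H² T))`, and any stochastic process in which
`Λ_i^1` is uniform, at each round `t ∈ [T]` the policies `π_i^t` are sampled
conditionally independently across players from `Λ_i^t` given the history `F_{t-1}`,
the estimates `V̄_i^{(t),π_i}` are `F_t`-measurable and a.s. sandwich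
`V_{i,1}^{π_i × π^t_{-i}}(s_1) ≤ V̄ ≤ V_{i,1}^{π_i × π^t_{-i}}(s_1) + ε` with
`V̄ ∈ [0, H]`, and `Λ_i^{t+1}(π_i) ∝ Λ_i^t(π_i) exp(η_i V̄_i^{(t),π_i})`, one has,
with probability at least `1 - δ`:
`max_i max_{π_i} ∑_{t=1}^T (V^{π_i × Λ^t_{-i}}_{i,1}(s_1) - V^{Λ^t}_{i,1}(s_1))
   ≤ ε T + C H √(T log(∑_i |Π_i| / δ))`. -/
theorem statement_13 :
    ∃ C : ℝ, 0 < C ∧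
      ∀ (S : Type) [Fintype S] (m H : ℕ) (A : Fin m → Type) [∀ j, Fintype (A j)]
        (P : ℕ → S → (∀ j, A j) → S → ℝ), (∀ h < H, ∀ s a, IsDist (P h s a)) →
      ∀ rew : Fin m → ℕ → S → (∀ j, A j) → ℝ,
        (∀ i, ∀ h < H, ∀ s a, rew i h s a ∈ Set.Icc (0 : ℝ) 1) →
      ∀ (s1 : S) (Pc : Fin m → Type) [∀ i, Fintype (Pc i)] [∀ i, Nonempty (Pc i)]
        (pol : ∀ i, Pc i → ℕ → S → A i → ℝ),
        (∀ i q, ∀ h < H, ∀ s, IsDist (pol i q h s)) →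
      ∀ (T : ℕ) (ε δ : ℝ), 0 ≤ ε → 0 < δ → δ < 1 →
      ∀ (Ω : Type) (m0 : MeasurableSpace Ω) (μ : Measure Ω), IsProbabilityMeasure μ →
      ∀ (F : Filtration ℕ m0) (πt : ℕ → ∀ i, Ω → Pc i),
        (∀ t i q, MeasurableSet[F t] {ω | πt t i ω = q}) →
      ∀ Vbar : ℕ → ∀ i, Pc i → Ω → ℝ,
        (∀ t i q, Measurable[F t] (Vbar t i q)) →
      ∀ Lam : ℕ → ∀ i, Pc i → Ω → ℝ,
        -- `Λ_i^1` is uniform on `Π_i`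
        (∀ i q ω, Lam 1 i q ω = 1 / (Fintype.card (Pc i) : ℝ)) →
        -- exponential-weights update with learning rate `η_i = √(log|Π_i|/(H²T))`
        (∀ t, 1 ≤ t → ∀ i q ω,
          Lam (t + 1) i q ω = Lam t i q ω *
              Real.exp (Real.sqrt (Real.log (Fintype.card (Pc i)) / ((H : ℝ) ^ 2 * T)) *
                Vbar t i q ω) /
            ∑ q', Lam t i q' ω *
              Real.exp (Real.sqrt (Real.log (Fintype.card (Pc i)) / ((H : ℝ) ^ 2 * T)) *
                Vbar t i q' ω)) →
        -- conditionally on `F_{t-1}`, each player samples `π_i^t ∼ Λ_i^t`,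
        -- independently across players
        (∀ t, 1 ≤ t → t ≤ T → ∀ q : ∀ i, Pc i,
          μ[Set.indicator {ω | ∀ i, πt t i ω = q i} (fun _ => (1 : ℝ)) | F (t - 1)]
            =ᵐ[μ] fun ω => ∏ i, Lam t i (q i) ω) →
        -- the estimates are optimistic and uniformly accurate, and lie in `[0, H]`
        (∀ t, 1 ≤ t → t ≤ T → ∀ i (q : Pc i), ∀ᵐ ω ∂μ,
          jointV H P (rew i)
              (prodPol fun j => pol j (Function.update (fun j' => πt t j' ω) i q j))
              0 s1
            ≤ Vbar t i q ω ∧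
          Vbar t i q ω ≤ jointV H P (rew i)
              (prodPol fun j => pol j (Function.update (fun j' => πt t j' ω) i q j))
              0 s1 + ε ∧
          0 ≤ Vbar t i q ω ∧ Vbar t i q ω ≤ H) →
        ENNReal.ofReal (1 - δ) ≤
          μ {ω | ∀ i (q : Pc i),
            ∑ t ∈ Finset.Icc 1 T,
              ((∑ qs : ∀ j, Pc j, (∏ j, Lam t j (qs j) ω) *
                  jointV H P (rew i)
                    (prodPol fun j => pol j (Function.update qs i q j)) 0 s1) -
               ∑ qs : ∀ j, Pc j, (∏ j, Lam t j (qs j) ω) *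
                  jointV H P (rew i) (prodPol fun j => pol j (qs j)) 0 s1)
              ≤ ε * T + C * H * Real.sqrt (T *
                  Real.log ((∑ j, (Fintype.card (Pc j) : ℝ)) / δ))} := by
  refine ⟨5, by norm_num, ?_⟩
  intro S _ m H A _ P hP rew hrew s1 Pc _ _ pol hpol T ε δ hε hδ0 hδ1 Ω m0 μ _ F πt hπt Vbar
    hVbar Lam hLam1 hLam hsamp hest
  have hu : ∀ i (qs : ∀ j, Pc j),
      jointV H P (rew i) (prodPol fun j => pol j (qs j)) 0 s1 ∈ Set.Icc (0 : ℝ) H := fun i qs => by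
    simpa only [Nat.sub_zero] using jointV_mem_Icc (π := prodPol fun j => pol j (qs j)) hP (hrew i)
      (fun h hh s => IsDist.pi fun j => hpol j (qs j) h hh s) 0 s1
  exact one_sub_le_measure_sum_deviationRegret_le hu hε hδ0 hδ1 hπt hVbar
    (fun i ω => ⟨fun q => hLam1 i q ω, fun t ht q => hLam t ht i q ω⟩)
    (fun t ht => hsamp t (Finset.mem_Icc.1 ht).1 (Finset.mem_Icc.1 ht).2)
    (fun t ht => hest t (Finset.mem_Icc.1 ht).1 (Finset.mem_Icc.1 ht).2)
end

section
/- (Log-determinant doubling criterion.) Let A and B be d×d real symmetric positive definite matrices with B ⪯ A (i.e., A − B positive semidefinite). If log det(A) − log det(B) ≤ 1, then A ⪯ e · B, where e is Euler's number. -/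
/-!
Write `B = S²` with `S = √B` and put `C = S⁻¹ A S⁻¹`. Then `1 ≤ C`, so every eigenvalue of `C` is
at least `1` and hence at most the product of all of them, `det C = det A / det B`. Thus
`C ≤ (det A / det B) • 1`, and conjugating back by `S` gives `A ≤ (det A / det B) • B ≤ e • B`.
-/

open Matrix
open scoped MatrixOrder

namespace Matrix

variable {n : Type*} [Fintype n] [DecidableEq n]

theorem le_det_smul_one_of_one_le {C : Matrix n n ℝ} (hC : 1 ≤ C) : C ≤ C.det • 1 := by
  have hCsa : IsSelfAdjoint C := .of_nonneg (zero_le_one.trans hC)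
  have hCh : C.IsHermitian := hCsa
  have heig : ∀ i, 1 ≤ hCh.eigenvalues i := fun i =>
    (CFC.one_le_iff C).mp hC _ (hCh.eigenvalues_mem_spectrum_real i)
  rw [← Algebra.algebraMap_eq_smul_one, le_algebraMap_iff_spectrum_le hCsa,
    hCh.spectrum_real_eq_range_eigenvalues]
  rintro - ⟨i, rfl⟩
  calc hCh.eigenvalues i = ∏ j ∈ {i}, hCh.eigenvalues j := (Finset.prod_singleton _ _).symm
    _ ≤ ∏ j, hCh.eigenvalues j :=
        Finset.prod_le_prod_of_subset_of_one_le (Finset.subset_univ _)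
          (fun j _ => zero_le_one.trans (heig j)) (fun j _ _ => heig j)
    _ = C.det := by simp [hCh.det_eq_prod_eigenvalues]

theorem le_det_div_det_smul_of_le {A B : Matrix n n ℝ} (hB : B.PosDef) (hBA : B ≤ A) :
    A ≤ (A.det / B.det) • B := by
  set S := CFC.sqrt B
  set T := S⁻¹
  have hS : IsSelfAdjoint S := by cfc_tac
  have hSS : S * S = B := CFC.sqrt_mul_sqrt_self B hB.posSemidef.nonneg
  have hSdet : IsUnit S.det :=
    isUnit_iff_ne_zero.mpr fun h => hB.det_pos.ne' (by rw [← hSS, det_mul, h, zero_mul])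
  have hT : IsSelfAdjoint T := IsHermitian.inv hS
  have hST : S * T = 1 := mul_nonsing_inv S hSdet
  have hTS : T * S = 1 := nonsing_inv_mul S hSdet
  set C := T * A * T
  have hC : 1 ≤ C := by
    have := hT.conjugate_le_conjugate hBA
    rwa [← hSS, ← mul_assoc, hTS, one_mul, hST] at this
  have hCdet : C.det = A.det / B.det := by
    rw [det_mul, det_mul, det_nonsing_inv, ← hSS, det_mul, Ring.inverse_eq_inv']
    field_simp [hSdet.ne_zero]
  have hSCS : S * C * S = A := by
    simp only [C, ← mul_assoc, hST, one_mul]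
    rw [mul_assoc, hTS, mul_one]
  have := hS.conjugate_le_conjugate (le_det_smul_one_of_one_le hC)
  rwa [hSCS, Matrix.mul_smul, Matrix.smul_mul, mul_one, hSS, hCdet] at this

end Matrix

theorem statement_16_general {d : ℕ} (A B : Matrix (Fin d) (Fin d) ℝ)
    (hB : B.PosDef) (hBA : (A - B).PosSemidef)
    (hdet : Real.log A.det - Real.log B.det ≤ 1) :
    (Real.exp 1 • B - A).PosSemidef := by
  have hA : A.PosDef := by simpa using hB.add_posSemidef hBA
  have hratio : A.det / B.det ≤ Real.exp 1 := by
    rw [← Real.log_le_iff_le_exp (div_pos hA.det_pos hB.det_pos),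
      Real.log_div hA.det_pos.ne' hB.det_pos.ne']
    exact hdet
  have hscale : (A.det / B.det) • B ≤ Real.exp 1 • B := by
    rw [le_iff, ← sub_smul]
    exact hB.posSemidef.smul (sub_nonneg.mpr hratio)
  exact (le_det_div_det_smul_of_le hB hBA).trans hscale

/-- log-determinant doubling criterion.  If `A` and `B` are `d × d`
real symmetric positive definite matrices with `B ⪯ A` (in the Loewner order) and
`log det A - log det B ≤ 1`, then `A ⪯ e • B`, where `e` is Euler's number. -/
theorem statement_16 {d : ℕ} (A B : Matrix (Fin d) (Fin d) ℝ)
    (hA : A.PosDef) (hB : B.PosDef) (hBA : (A - B).PosSemidef)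
    (hdet : Real.log A.det - Real.log B.det ≤ 1) :
    (Real.exp 1 • B - A).PosSemidef :=
  statement_16_general A B hB hBA hdet
end
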